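/- arXiv:2006.16781 — 7 statements merged into one kernel-verified Lean document; each statement's English description precedes it below -/
import Mathlib

section
/- Let f : ℝⁿ → ℝ be convex and differentiable with ∇f Lipschitz continuous on ℝⁿ with constant L(f) > 0 for the Euclidean norm, let A be a q × n real matrix whose rows are linearly independent, and let b ∈ ℝ^q. Then the dual function θ(λ) = inf_{x ∈ ℝⁿ} [ f(x) + λᵀ(Ax − b) ], λ ∈ ℝ^q, is strongly concave on ℝ^q with constant of strong concavity λ_min(AAᵀ)/L(f) with respect to the Euclidean norm. -/
/-!
Fix `x`. For every `λ`, the function `y ↦ f y + ⟪Aᵀλ, y⟫` has the `L`-Lipschitz gradient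
`∇f + Aᵀλ`, so one gradient step from `x` shows that its value at `x` exceeds its infimum
`θ(λ) + ⟪λ, b⟫` by at least `‖∇f(x) + Aᵀλ‖² / (2L)`. The Lagrangian at `x` is affine in `λ`;
averaging these two bounds for `λ₁, λ₂` and using
`t‖u‖² + (1 - t)‖v‖² ≥ t(1 - t)‖u - v‖²` with `u - v = Aᵀ(λ₁ - λ₂)` gives the strong concavity
inequality with `‖Aᵀ(λ₁ - λ₂)‖² / L` as the quadratic term; finally
`‖Aᵀμ‖² = ⟪μ, AAᵀμ⟫ ≥ λ_min(AAᵀ) ‖μ‖²`.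
-/

open scoped Matrix

/-- The smallest eigenvalue of a Hermitian real matrix. -/
noncomputable def lambdaMin {q : ℕ} (M : Matrix (Fin q) (Fin q) ℝ)
    (hM : M.IsHermitian) : ℝ := ⨅ i, hM.eigenvalues i

open scoped RealInnerProductSpace

section LipschitzGradient

variable {E : Type*} [NormedAddCommGroup E] [InnerProductSpace ℝ E]

theorem mul_mul_norm_sub_sq_le (v w : E) {a b : ℝ} (ha : 0 ≤ a) (hb : 0 ≤ b) (hab : a + b = 1) :
    a * b * ‖v - w‖ ^ 2 ≤ a * ‖v‖ ^ 2 + b * ‖w‖ ^ 2 := by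
  have hsq : StrongConvexOn Set.univ 2 fun x : E => ‖x‖ ^ 2 :=
    strongConvexOn_iff_convex.2 (by simpa using convexOn_const (0 : ℝ) convex_univ)
  have := hsq.2 (Set.mem_univ v) (Set.mem_univ w) ha hb hab
  simp only [smul_eq_mul] at this
  nlinarith [sq_nonneg ‖a • v + b • w‖]

variable [CompleteSpace E]

theorem HasGradientAt.hasDerivAt_comp_add_smul {f : E → ℝ} {g x d : E} {s : ℝ}
    (hf : HasGradientAt f g (x + s • d)) :
    HasDerivAt (fun s : ℝ => f (x + s • d)) ⟪g, d⟫ s := by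
  have hline : HasDerivAt (fun s : ℝ => x + s • d) d s := by
    simpa using ((hasDerivAt_id s).smul_const d).const_add x
  simpa [Function.comp_def] using hf.hasFDerivAt.comp_hasDerivAt s hline

theorem HasGradientAt.add_inner_const {f : E → ℝ} {g x : E} (hf : HasGradientAt f g x) (a : E) :
    HasGradientAt (fun y => f y + ⟪a, y⟫) (g + a) x := by
  rw [hasGradientAt_iff_hasFDerivAt, map_add]
  exact hf.hasFDerivAt.add (innerSL ℝ a).hasFDerivAt

variable {f : E → ℝ} {f' : E → E} {L : ℝ}

theorem quadratic_upper_bound_of_lipschitz_gradient (hf : ∀ x, HasGradientAt f (f' x) x)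
    (hLip : ∀ x y, ‖f' y - f' x‖ ≤ L * ‖y - x‖) (x y : E) :
    f y ≤ f x + ⟪f' x, y - x⟫ + L / 2 * ‖y - x‖ ^ 2 := by
  set d := y - x
  let ψ : ℝ → ℝ := fun s => f (x + s • d) - s * ⟪f' x, d⟫ - L / 2 * s ^ 2 * ‖d‖ ^ 2
  have hψ : ∀ s, HasDerivAt ψ (⟪f' (x + s • d) - f' x, d⟫ - L * s * ‖d‖ ^ 2) s := by
    intro s
    have hquad := ((hasDerivAt_pow 2 s).const_mul (L / 2)).mul_const (‖d‖ ^ 2)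
    refine (((hf _).hasDerivAt_comp_add_smul.sub ((hasDerivAt_id s).mul_const ⟪f' x, d⟫)).sub
      hquad).congr_deriv ?_
    rw [inner_sub_left]
    push_cast
    ring
  have hanti : AntitoneOn ψ (Set.Icc 0 1) := by
    refine antitoneOn_of_hasDerivWithinAt_nonpos (convex_Icc 0 1)
      (fun s _ => (hψ s).continuousAt.continuousWithinAt)
      (fun s _ => (hψ s).hasDerivWithinAt) fun s hs => ?_
    rw [interior_Icc] at hs
    have hgrad : ‖f' (x + s • d) - f' x‖ ≤ L * (s * ‖d‖) := by
      simpa [norm_smul, abs_of_pos hs.1] using hLip x (x + s • d)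
    nlinarith [real_inner_le_norm (f' (x + s • d) - f' x) d, norm_nonneg d]
  have := hanti (Set.left_mem_Icc.2 zero_le_one) (Set.right_mem_Icc.2 zero_le_one) zero_le_one
  simp only [ψ, d, zero_smul, add_zero, one_smul, add_sub_cancel] at this
  linarith

theorem le_sub_norm_sq_div_of_forall_le (hf : ∀ x, HasGradientAt f (f' x) x)
    (hLip : ∀ x y, ‖f' y - f' x‖ ≤ L * ‖y - x‖) (hL : 0 < L) {r : ℝ} (hr : ∀ y, r ≤ f y)
    (x : E) : r ≤ f x - ‖f' x‖ ^ 2 / (2 * L) := by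
  have h := quadratic_upper_bound_of_lipschitz_gradient hf hLip x (x - L⁻¹ • f' x)
  rw [sub_sub_cancel_left, inner_neg_right, real_inner_smul_right, real_inner_self_eq_norm_sq,
    norm_neg, norm_smul, Real.norm_of_nonneg (inv_nonneg.2 hL.le)] at h
  have : L / 2 * (L⁻¹ * ‖f' x‖) ^ 2 = ‖f' x‖ ^ 2 / (2 * L) := by field_simp
  have : L⁻¹ * ‖f' x‖ ^ 2 = 2 * (‖f' x‖ ^ 2 / (2 * L)) := by field_simp
  linarith [hr (x - L⁻¹ • f' x)]

/-- The `1 / L`-strong concavity of `a ↦ ⨅ y, f y + ⟪a, y⟫`, stated through lower bounds since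
this infimum may be `-∞`. -/
theorem convexComb_add_norm_sub_sq_le_of_forall_le_add_inner
    (hf : ∀ x, HasGradientAt f (f' x) x) (hLip : ∀ x y, ‖f' y - f' x‖ ≤ L * ‖y - x‖) (hL : 0 < L)
    {a₁ a₂ : E} {r₁ r₂ : ℝ} (h₁ : ∀ y, r₁ ≤ f y + ⟪a₁, y⟫) (h₂ : ∀ y, r₂ ≤ f y + ⟪a₂, y⟫)
    {t : ℝ} (ht₀ : 0 ≤ t) (ht₁ : t ≤ 1) (x : E) :
    t * r₁ + (1 - t) * r₂ + t * (1 - t) / (2 * L) * ‖a₁ - a₂‖ ^ 2 ≤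
      f x + ⟪t • a₁ + (1 - t) • a₂, x⟫ := by
  have hLip' (a : E) (x y : E) : ‖(f' y + a) - (f' x + a)‖ ≤ L * ‖y - x‖ := by
    simpa only [add_sub_add_right_eq_sub] using hLip x y
  have k₁ := le_sub_norm_sq_div_of_forall_le (fun x => (hf x).add_inner_const a₁) (hLip' a₁) hL h₁ x
  have k₂ := le_sub_norm_sq_div_of_forall_le (fun x => (hf x).add_inner_const a₂) (hLip' a₂) hL h₂ x
  have hsq := mul_mul_norm_sub_sq_le (f' x + a₁) (f' x + a₂) ht₀ (sub_nonneg.2 ht₁) (by ring)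
  rw [add_sub_add_left_eq_sub] at hsq
  calc t * r₁ + (1 - t) * r₂ + t * (1 - t) / (2 * L) * ‖a₁ - a₂‖ ^ 2
      ≤ t * (f x + ⟪a₁, x⟫ - ‖f' x + a₁‖ ^ 2 / (2 * L))
        + (1 - t) * (f x + ⟪a₂, x⟫ - ‖f' x + a₂‖ ^ 2 / (2 * L))
        + (t * ‖f' x + a₁‖ ^ 2 + (1 - t) * ‖f' x + a₂‖ ^ 2) / (2 * L) := by
        rw [div_mul_eq_mul_div]
        gcongr
    _ = f x + ⟪t • a₁ + (1 - t) • a₂, x⟫ := by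
        rw [inner_add_left, real_inner_smul_left, real_inner_smul_left]
        ring

end LipschitzGradient

theorem Matrix.IsHermitian.mul_norm_sq_le_inner_toEuclideanLin {ι : Type*} [Fintype ι]
    [DecidableEq ι] {M : Matrix ι ι ℝ} (hM : M.IsHermitian) {c : ℝ}
    (hc : ∀ i, c ≤ hM.eigenvalues i) (x : EuclideanSpace ℝ ι) :
    c * ‖x‖ ^ 2 ≤ ⟪x, M.toEuclideanLin x⟫ := by
  set B := hM.eigenvectorBasis
  have hB : ∀ i, ⟪B i, M.toEuclideanLin x⟫ = hM.eigenvalues i * ⟪B i, x⟫ := fun i => by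
    rw [← isSymmetric_toEuclideanLin_iff.2 hM, toLpLin_apply, hM.mulVec_eigenvectorBasis,
      WithLp.toLp_smul, WithLp.toLp_ofLp, real_inner_smul_left]
  calc c * ‖x‖ ^ 2 = ∑ i, c * ⟪B i, x⟫ ^ 2 := by rw [← B.sum_sq_inner_right, Finset.mul_sum]
    _ ≤ ∑ i, hM.eigenvalues i * ⟪B i, x⟫ ^ 2 := by gcongr with i; exact hc i
    _ = ⟪x, M.toEuclideanLin x⟫ := by
      rw [← B.sum_inner_mul_inner]
      refine Finset.sum_congr rfl fun i _ => ?_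
      rw [hB, real_inner_comm]
      ring

theorem lambdaMin_le_eigenvalues {q : ℕ} {M : Matrix (Fin q) (Fin q) ℝ} (hM : M.IsHermitian)
    (i : Fin q) : lambdaMin M hM ≤ hM.eigenvalues i :=
  ciInf_le (Set.finite_range _).bddBelow i

theorem lambdaMin_mul_norm_sq_le_norm_adjoint_sq {n q : ℕ} (A : Matrix (Fin q) (Fin n) ℝ)
    (μ : EuclideanSpace ℝ (Fin q)) :
    lambdaMin (A * Aᵀ) (Matrix.isHermitian_mul_conjTranspose_self A) * ‖μ‖ ^ 2 ≤
      ‖A.toEuclideanLin.adjoint μ‖ ^ 2 := by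
  have hAAt : (A * Aᴴ).toEuclideanLin = A.toEuclideanLin ∘ₗ A.toEuclideanLin.adjoint := by
    rw [← Matrix.toEuclideanLin_conjTranspose_eq_adjoint]
    exact Matrix.toLpLin_mul_same 2 A Aᴴ
  calc _ ≤ ⟪μ, (A * Aᴴ).toEuclideanLin μ⟫ :=
        (Matrix.isHermitian_mul_conjTranspose_self A).mul_norm_sq_le_inner_toEuclideanLin
          (lambdaMin_le_eigenvalues _) μ
    _ = ‖A.toEuclideanLin.adjoint μ‖ ^ 2 := by
      rw [hAAt, LinearMap.comp_apply, ← LinearMap.adjoint_inner_left, real_inner_self_eq_norm_sq]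

theorem sum_mul_mulVec_sub_eq_inner_adjoint {n q : ℕ} (A : Matrix (Fin q) (Fin n) ℝ)
    (b μ : EuclideanSpace ℝ (Fin q)) (x : EuclideanSpace ℝ (Fin n)) :
    ∑ i, μ i * (A.mulVec x i - b i) = ⟪A.toEuclideanLin.adjoint μ, x⟫ - ⟪μ, b⟫ := by
  rw [LinearMap.adjoint_inner_left, ← inner_sub_right, PiLp.inner_apply]
  simp [mul_comm]

theorem le_of_iInf_coe_eq {ι : Type*} {g : ι → ℝ} {r : ℝ}
    (h : ⨅ i, (g i : EReal) = r) (i : ι) : r ≤ g i :=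
  EReal.coe_le_coe_iff.1 (h ▸ iInf_le _ i)

theorem dual_function_strongly_concave_general
    {n q : ℕ} (f : EuclideanSpace ℝ (Fin n) → ℝ)
    (f' : EuclideanSpace ℝ (Fin n) → EuclideanSpace ℝ (Fin n))
    (hdiff : ∀ x, HasGradientAt f (f' x) x)
    (L : ℝ) (hL : 0 < L)
    (hLip : ∀ x y, ‖f' y - f' x‖ ≤ L * ‖y - x‖)
    (A : Matrix (Fin q) (Fin n) ℝ)
    (b : EuclideanSpace ℝ (Fin q))
    (θ : EuclideanSpace ℝ (Fin q) → EReal)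
    (hθ : θ = fun lam => ⨅ x : EuclideanSpace ℝ (Fin n),
      ((f x + ∑ i, lam i * (A.mulVec x i - b i) : ℝ) : EReal)) :
    ∀ l1 l2 : EuclideanSpace ℝ (Fin q), ∀ r1 r2 : ℝ,
      θ l1 = (r1 : EReal) → θ l2 = (r2 : EReal) →
      ∀ t : ℝ, 0 ≤ t → t ≤ 1 →
      ((t * r1 + (1 - t) * r2
        + (lambdaMin (A * Aᵀ) (Matrix.isHermitian_mul_conjTranspose_self A) / L)
          * (t * (1 - t)) / 2 * ‖l1 - l2‖ ^ 2 : ℝ) : EReal)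
        ≤ θ (t • l1 + (1 - t) • l2) := by
  intro l1 l2 r1 r2 h1 h2 t ht0 ht1
  have lower (l : EuclideanSpace ℝ (Fin q)) (r : ℝ) (hr : θ l = r) (y) :
      r + ⟪l, b⟫ ≤ f y + ⟪A.toEuclideanLin.adjoint l, y⟫ := by
    have := le_of_iInf_coe_eq (hθ ▸ hr) y
    rw [sum_mul_mulVec_sub_eq_inner_adjoint] at this
    linarith
  refine hθ ▸ le_iInf fun x => EReal.coe_le_coe_iff.2 ?_
  have key := convexComb_add_norm_sub_sq_le_of_forall_le_add_inner hdiff hLip hL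
    (lower l1 r1 h1) (lower l2 r2 h2) ht0 ht1 x
  have hquad : lambdaMin (A * Aᵀ) (Matrix.isHermitian_mul_conjTranspose_self A) / L
      * (t * (1 - t)) / 2 * ‖l1 - l2‖ ^ 2 ≤ t * (1 - t) / (2 * L)
      * ‖A.toEuclideanLin.adjoint l1 - A.toEuclideanLin.adjoint l2‖ ^ 2 := by
    have : 0 ≤ t * (1 - t) / (2 * L) := by have := sub_nonneg.2 ht1; positivity
    rw [← map_sub]
    calc _ = t * (1 - t) / (2 * L) * (lambdaMin (A * Aᵀ)
          (Matrix.isHermitian_mul_conjTranspose_self A) * ‖l1 - l2‖ ^ 2) := by ring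
      _ ≤ _ := mul_le_mul_of_nonneg_left (lambdaMin_mul_norm_sq_le_norm_adjoint_sq A _) this
  rw [sum_mul_mulVec_sub_eq_inner_adjoint, map_add, map_smul, map_smul]
  simp only [inner_add_left, real_inner_smul_left] at key ⊢
  linarith

/-- If `f : ℝⁿ → ℝ` is convex, differentiable, with `L`-Lipschitz
gradient (`L > 0`), and the rows of `A` are linearly independent, then the dual
function `θ(λ) = inf_x [f(x) + λᵀ(Ax − b)]` is strongly concave on `ℝ^q` with
constant `λ_min(AAᵀ)/L` for the Euclidean norm. -/
theorem dual_function_strongly_concave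
    {n q : ℕ} (f : EuclideanSpace ℝ (Fin n) → ℝ)
    (f' : EuclideanSpace ℝ (Fin n) → EuclideanSpace ℝ (Fin n))
    (hconv : ConvexOn ℝ Set.univ f)
    (hdiff : ∀ x, HasGradientAt f (f' x) x)
    (L : ℝ) (hL : 0 < L)
    (hLip : ∀ x y, ‖f' y - f' x‖ ≤ L * ‖y - x‖)
    (A : Matrix (Fin q) (Fin n) ℝ)
    (hA : LinearIndependent ℝ A)
    (b : EuclideanSpace ℝ (Fin q))
    (θ : EuclideanSpace ℝ (Fin q) → EReal)
    (hθ : θ = fun lam => ⨅ x : EuclideanSpace ℝ (Fin n),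
      ((f x + ∑ i, lam i * (A.mulVec x i - b i) : ℝ) : EReal)) :
    ∀ l1 l2 : EuclideanSpace ℝ (Fin q), ∀ r1 r2 : ℝ,
      θ l1 = (r1 : EReal) → θ l2 = (r2 : EReal) →
      ∀ t : ℝ, 0 ≤ t → t ≤ 1 →
      ((t * r1 + (1 - t) * r2
        + (lambdaMin (A * Aᵀ) (Matrix.isHermitian_mul_conjTranspose_self A) / L)
          * (t * (1 - t)) / 2 * ‖l1 - l2‖ ^ 2 : ℝ) : EReal)
        ≤ θ (t • l1 + (1 - t) • l2) :=
  dual_function_strongly_concave_general f f' hdiff L hL hLip A b θ hθ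
end

section
/- Let h : ℝⁿ → ℝ ∪ {+∞} be strongly convex on ℝⁿ with constant of strong convexity α > 0 with respect to the Euclidean norm, and let A be a q × n real matrix whose rows are linearly independent. Then the function λ ↦ h(−Aᵀλ) is strongly convex on ℝ^q with constant of strong convexity α·λ_min(AAᵀ) with respect to the Euclidean norm. -/
/-!
Precomposing with a linear map `L` keeps the strong convexity inequality, with the
modulus multiplied by any `c` such that `c‖λ‖² ≤ ‖Lλ‖²`. For `L λ = -Aᵀλ` one has
`‖Lλ‖² = ⟪λ, AAᵀλ⟫`, and expanding `λ` in an orthonormal eigenbasis of `AAᵀ` shows that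
`c = λ_min(AAᵀ)` works.
-/

open scoped Matrix

open scoped InnerProductSpace

namespace Matrix

variable {𝕜 m n : Type*} [RCLike 𝕜] [Fintype m] [DecidableEq m] [Fintype n] [DecidableEq n]

theorem norm_toEuclideanLin_sq (B : Matrix m n 𝕜) (v : EuclideanSpace 𝕜 n) :
    ‖toEuclideanLin B v‖ ^ 2 = RCLike.re ⟪v, toEuclideanLin (Bᴴ * B) v⟫_𝕜 := by
  rw [toLpLin_mul 2 2 2, LinearMap.comp_apply, toEuclideanLin_conjTranspose_eq_adjoint,
    LinearMap.adjoint_inner_right, inner_self_eq_norm_sq]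

namespace IsHermitian

variable {M : Matrix n n 𝕜}

theorem inner_eigenvectorBasis_toEuclideanLin (hM : M.IsHermitian) (i : n)
    (v : EuclideanSpace 𝕜 n) :
    ⟪hM.eigenvectorBasis i, toEuclideanLin M v⟫_𝕜 =
      hM.eigenvalues i * ⟪hM.eigenvectorBasis i, v⟫_𝕜 := by
  rw [← isSymmetric_toEuclideanLin_iff.mpr hM, toLpLin_apply, hM.mulVec_eigenvectorBasis,
    WithLp.toLp_smul, WithLp.toLp_ofLp, RCLike.real_smul_eq_coe_smul (K := 𝕜), inner_smul_left,
    RCLike.conj_ofReal]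

theorem iInf_eigenvalues_mul_norm_sq_le_re_inner (hM : M.IsHermitian) (v : EuclideanSpace 𝕜 n) :
    (⨅ i, hM.eigenvalues i) * ‖v‖ ^ 2 ≤ RCLike.re ⟪v, toEuclideanLin M v⟫_𝕜 := by
  set b := hM.eigenvectorBasis
  rw [← b.sum_inner_mul_inner, ← b.sum_sq_norm_inner_left, Finset.mul_sum, map_sum]
  refine Finset.sum_le_sum fun i _ => ?_
  rw [inner_eigenvectorBasis_toEuclideanLin, ← inner_conj_symm (b i) v, mul_left_comm,
    RCLike.mul_conj, ← RCLike.ofReal_pow, ← RCLike.ofReal_mul, RCLike.ofReal_re]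
  exact mul_le_mul_of_nonneg_right (ciInf_le (Finite.bddBelow_range _) i) (by positivity)

end IsHermitian

end Matrix

section EStrongConvex

variable {E F : Type*} [SeminormedAddCommGroup E] [Module ℝ E]
  [SeminormedAddCommGroup F] [Module ℝ F]

def EStrongConvex (α : ℝ) (h : E → EReal) : Prop :=
  ∀ x y, h x ≠ ⊤ → h y ≠ ⊤ → ∀ t : ℝ, 0 ≤ t → t ≤ 1 →
    h (t • x + (1 - t) • y) ≤
      ((t * (h x).toReal + (1 - t) * (h y).toReal
          - α * (t * (1 - t)) / 2 * ‖y - x‖ ^ 2 : ℝ) : EReal)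

theorem EStrongConvex.comp_linearMap {α c : ℝ} {h : F → EReal} (hh : EStrongConvex α h)
    (hα : 0 ≤ α) (L : E →ₗ[ℝ] F) (hL : ∀ v, c * ‖v‖ ^ 2 ≤ ‖L v‖ ^ 2) :
    EStrongConvex (α * c) (h ∘ L) := by
  intro x y hx hy t ht0 ht1
  rw [Function.comp_apply, map_add, map_smul, map_smul]
  refine (hh _ _ hx hy t ht0 ht1).trans (EReal.coe_le_coe_iff.2 ?_)
  have ht1' : 0 ≤ 1 - t := sub_nonneg.2 ht1
  have hnorm := mul_le_mul_of_nonneg_left (hL (y - x))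
    (by positivity : 0 ≤ α * (t * (1 - t)) / 2)
  rw [map_sub] at hnorm
  simp only [Function.comp_apply]
  linarith

end EStrongConvex

theorem comp_neg_transpose_strongly_convex_general
    {n q : ℕ} (h : EuclideanSpace ℝ (Fin n) → EReal)
    (α : ℝ) (hα : 0 < α)
    (hsc : ∀ x y : EuclideanSpace ℝ (Fin n), h x ≠ ⊤ → h y ≠ ⊤ →
      ∀ t : ℝ, 0 ≤ t → t ≤ 1 →
      h (t • x + (1 - t) • y)
        ≤ ((t * (h x).toReal + (1 - t) * (h y).toReal
            - α * (t * (1 - t)) / 2 * ‖y - x‖ ^ 2 : ℝ) : EReal))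
    (A : Matrix (Fin q) (Fin n) ℝ) :
    ∀ l1 l2 : EuclideanSpace ℝ (Fin q),
      h (WithLp.toLp 2 (fun j => -(Aᵀ.mulVec l1 j))) ≠ ⊤ → h (WithLp.toLp 2 (fun j => -(Aᵀ.mulVec l2 j))) ≠ ⊤ →
      ∀ t : ℝ, 0 ≤ t → t ≤ 1 →
      h (WithLp.toLp 2 (fun j => -(Aᵀ.mulVec (t • l1 + (1 - t) • l2) j)))
        ≤ ((t * (h (WithLp.toLp 2 (fun j => -(Aᵀ.mulVec l1 j)))).toReal
            + (1 - t) * (h (WithLp.toLp 2 (fun j => -(Aᵀ.mulVec l2 j)))).toReal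
            - (α * lambdaMin (A * Aᵀ) (Matrix.isHermitian_mul_conjTranspose_self A))
              * (t * (1 - t)) / 2 * ‖l1 - l2‖ ^ 2 : ℝ) : EReal) := by
  have hL : ∀ v, lambdaMin (A * Aᵀ) (Matrix.isHermitian_mul_conjTranspose_self A) * ‖v‖ ^ 2 ≤
      ‖(-Matrix.toEuclideanLin Aᵀ) v‖ ^ 2 := fun v => by
    rw [LinearMap.neg_apply, norm_neg, Matrix.norm_toEuclideanLin_sq]
    exact (A.isHermitian_mul_conjTranspose_self).iInf_eigenvalues_mul_norm_sq_le_re_inner v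
  intro l1 l2
  rw [norm_sub_rev]
  exact EStrongConvex.comp_linearMap hsc hα.le _ hL l1 l2

/-- If `h : ℝⁿ → ℝ ∪ {+∞}` is strongly convex on `ℝⁿ` with constant
`α > 0` (Euclidean norm) and the rows of `A` are linearly independent, then
`λ ↦ h(−Aᵀλ)` is strongly convex on `ℝ^q` with constant `α·λ_min(AAᵀ)`. -/
theorem comp_neg_transpose_strongly_convex
    {n q : ℕ} (h : EuclideanSpace ℝ (Fin n) → EReal)
    (hne_bot : ∀ x, h x ≠ ⊥)
    (α : ℝ) (hα : 0 < α)
    (hsc : ∀ x y : EuclideanSpace ℝ (Fin n), h x ≠ ⊤ → h y ≠ ⊤ →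
      ∀ t : ℝ, 0 ≤ t → t ≤ 1 →
      h (t • x + (1 - t) • y)
        ≤ ((t * (h x).toReal + (1 - t) * (h y).toReal
            - α * (t * (1 - t)) / 2 * ‖y - x‖ ^ 2 : ℝ) : EReal))
    (A : Matrix (Fin q) (Fin n) ℝ)
    (hA : LinearIndependent ℝ A) :
    ∀ l1 l2 : EuclideanSpace ℝ (Fin q),
      h (WithLp.toLp 2 (fun j => -(Aᵀ.mulVec l1 j))) ≠ ⊤ → h (WithLp.toLp 2 (fun j => -(Aᵀ.mulVec l2 j))) ≠ ⊤ →
      ∀ t : ℝ, 0 ≤ t → t ≤ 1 →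
      h (WithLp.toLp 2 (fun j => -(Aᵀ.mulVec (t • l1 + (1 - t) • l2) j)))
        ≤ ((t * (h (WithLp.toLp 2 (fun j => -(Aᵀ.mulVec l1 j)))).toReal
            + (1 - t) * (h (WithLp.toLp 2 (fun j => -(Aᵀ.mulVec l2 j)))).toReal
            - (α * lambdaMin (A * Aᵀ) (Matrix.isHermitian_mul_conjTranspose_self A))
              * (t * (1 - t)) / 2 * ‖l1 - l2‖ ^ 2 : ℝ) : EReal) :=
  comp_neg_transpose_strongly_convex_general h α hα hsc A
end

section
/- Let f : ℝⁿ → ℝ be strongly convex on ℝⁿ with constant α > 0 with respect to the Euclidean norm, let A be a q × n real matrix, and b ∈ ℝ^q. For each λ ∈ ℝ^q let x(λ) denote the unique minimizer of x ↦ f(x) + λᵀ(Ax − b). Then the dual function θ(λ) = f(x(λ)) + λᵀ(Ax(λ) − b) is differentiable on ℝ^q with ∇θ(λ) = Ax(λ) − b, provided f is also differentiable. -/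
/-!
The dual function is a pointwise infimum of the affine functions `μ ↦ f x + ⟪μ, A x - b⟫`,
attained at `x(μ)`. Testing the infimum at `x(λ)` and at `x(μ)` squeezes
`θ μ - θ λ - ⟪A x(λ) - b, μ - λ⟫` between `-‖μ - λ‖ ‖A x(μ) - A x(λ)‖` and `0`, so `θ` has
gradient `A x(λ) - b` as soon as `x(·)` is continuous (Danskin's theorem). Strong convexity gives
quadratic growth of the Lagrangian around its minimizer; adding the growth inequalities at `λ`
and `μ` shows that `x(·)` is `2‖A‖/α`-Lipschitz.
-/

open scoped Matrix

open Set
open scoped RealInnerProductSpace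

section StrongConvexity

variable {E : Type*} [NormedAddCommGroup E] [NormedSpace ℝ E] {s : Set E} {m : ℝ} {f g : E → ℝ}

lemma StrongConvexOn.add_convexOn (hf : StrongConvexOn s m f) (hg : ConvexOn ℝ s g) :
    StrongConvexOn s m (f + g) := by
  have h := hf.add hg.uniformConvexOn_zero
  rwa [add_zero] at h

lemma StrongConvexOn.add_mul_sq_le_of_isMinOn (hg : StrongConvexOn s m g) {x₀ x : E}
    (hx₀ : x₀ ∈ s) (hx : x ∈ s) (hmin : IsMinOn g s x₀) :
    g x₀ + m / 4 * ‖x - x₀‖ ^ 2 ≤ g x := by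
  have ha : (0 : ℝ) ≤ 1 / 2 := by norm_num
  have hab : (1 / 2 : ℝ) + 1 / 2 = 1 := by norm_num
  have hmid := hg.2 hx hx₀ ha ha hab
  have hle := isMinOn_iff.1 hmin _ (hg.1 hx hx₀ ha ha hab)
  simp only [smul_eq_mul] at hmid
  linarith

end StrongConvexity

section Lagrangian

variable {E F : Type*} [NormedAddCommGroup E] [NormedSpace ℝ E]
  [NormedAddCommGroup F] [InnerProductSpace ℝ F]

lemma convexOn_inner_sub (s : Set E) (hs : Convex ℝ s) (L : E →ₗ[ℝ] F) (μ b : F) :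
    ConvexOn ℝ s (fun x ↦ ⟪μ, L x - b⟫) :=
  (((innerₛₗ ℝ μ ∘ₗ L).convexOn hs).sub (concaveOn_const ⟪μ, b⟫ hs)).congr fun x _ ↦ by
    simp [inner_sub_right]

theorem StrongConvexOn.lipschitzWith_lagrangian_argmin {f : E → ℝ} {m : ℝ}
    (hf : StrongConvexOn univ m f) (hm : 0 < m) (L : E →L[ℝ] F) (b : F) {xmin : F → E}
    (hmin : ∀ μ x, f (xmin μ) + ⟪μ, L (xmin μ) - b⟫ ≤ f x + ⟪μ, L x - b⟫) :
    LipschitzWith (2 * ‖L‖ / m).toNNReal xmin := by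
  have hgrowth : ∀ ν x, f (xmin ν) + ⟪ν, L (xmin ν) - b⟫ + m / 4 * ‖x - xmin ν‖ ^ 2
      ≤ f x + ⟪ν, L x - b⟫ := fun ν x ↦
    (hf.add_convexOn (convexOn_inner_sub univ convex_univ L.toLinearMap ν b)
      ).add_mul_sq_le_of_isMinOn (mem_univ _) (mem_univ _) (isMinOn_univ_iff.2 (hmin ν))
  refine LipschitzWith.of_dist_le' fun μ ν ↦ ?_
  rw [dist_eq_norm, dist_eq_norm]
  have hcross : m / 2 * ‖xmin μ - xmin ν‖ ^ 2 ≤ ⟪μ - ν, L (xmin ν - xmin μ)⟫ := by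
    have h₁ := hgrowth μ (xmin ν)
    have h₂ := hgrowth ν (xmin μ)
    rw [norm_sub_rev] at h₁
    simp only [map_sub, inner_sub_left, inner_sub_right] at h₁ h₂ ⊢
    linarith
  have hCS : ⟪μ - ν, L (xmin ν - xmin μ)⟫ ≤ ‖μ - ν‖ * (‖L‖ * ‖xmin μ - xmin ν‖) := by
    refine (real_inner_le_norm _ _).trans (mul_le_mul_of_nonneg_left ?_ (norm_nonneg _))
    rw [← norm_sub_rev]
    exact L.le_opNorm _
  rw [div_mul_eq_mul_div, le_div_iff₀ hm]
  rcases (norm_nonneg (xmin μ - xmin ν)).eq_or_lt with h0 | h0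
  · rw [← h0, zero_mul]
    positivity
  · nlinarith

end Lagrangian

section Danskin

variable {E F : Type*} [NormedAddCommGroup F] [InnerProductSpace ℝ F]
  {f : E → ℝ} {c : E → F} {xmin : F → E} {θ : F → ℝ}

lemma abs_sub_sub_inner_le_of_inf_attained (hle : ∀ μ x, θ μ ≤ f x + ⟪μ, c x⟫)
    (heq : ∀ μ, θ μ = f (xmin μ) + ⟪μ, c (xmin μ)⟫) (μ ν : F) :
    |θ μ - θ ν - ⟪c (xmin ν), μ - ν⟫| ≤ ‖μ - ν‖ * ‖c (xmin μ) - c (xmin ν)‖ := by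
  have hup := hle μ (xmin ν)
  have hlow := hle ν (xmin μ)
  have hCS := abs_real_inner_le_norm (μ - ν) (c (xmin μ) - c (xmin ν))
  rw [abs_le] at hCS ⊢
  simp only [heq, inner_sub_left, inner_sub_right, real_inner_comm (c (xmin ν))] at *
  constructor <;> nlinarith [norm_nonneg (μ - ν), norm_nonneg (c (xmin μ) - c (xmin ν))]

theorem hasGradientAt_of_inf_attained [CompleteSpace F] (hle : ∀ μ x, θ μ ≤ f x + ⟪μ, c x⟫)
    (heq : ∀ μ, θ μ = f (xmin μ) + ⟪μ, c (xmin μ)⟫) {ν : F} (hc : ContinuousAt (c ∘ xmin) ν) :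
    HasGradientAt θ (c (xmin ν)) ν := by
  rw [hasGradientAt_iff_hasFDerivAt, hasFDerivAt_iff_isLittleO, Asymptotics.isLittleO_iff]
  intro ε hε
  filter_upwards [Metric.continuousAt_iff'.1 hc ε hε] with μ hμ
  rw [InnerProductSpace.toDual_apply_apply, Real.norm_eq_abs]
  calc _ ≤ ‖μ - ν‖ * ‖c (xmin μ) - c (xmin ν)‖ :=
        abs_sub_sub_inner_le_of_inf_attained hle heq μ ν
    _ ≤ ε * ‖μ - ν‖ := by
        rw [mul_comm]
        gcongr
        simpa only [Function.comp_apply, dist_eq_norm] using hμ.le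

end Danskin

lemma Matrix.sum_mul_mulVec_sub_eq_inner {m n : Type*} [Fintype m] [Fintype n] [DecidableEq n]
    (A : Matrix m n ℝ) (μ b : EuclideanSpace ℝ m) (x : EuclideanSpace ℝ n) :
    ∑ i, μ i * (A.mulVec x i - b i) = ⟪μ, A.toEuclideanLin x - b⟫ := by
  simp [PiLp.inner_apply, mul_comm]

theorem dual_function_gradient_general
    {n q : ℕ} (f : EuclideanSpace ℝ (Fin n) → ℝ)
    (α : ℝ) (hα : 0 < α)
    (hsc : ∀ x y : EuclideanSpace ℝ (Fin n), ∀ t : ℝ, 0 ≤ t → t ≤ 1 →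
      f (t • x + (1 - t) • y)
        ≤ t * f x + (1 - t) * f y - α * (t * (1 - t)) / 2 * ‖y - x‖ ^ 2)
    (A : Matrix (Fin q) (Fin n) ℝ)
    (b : EuclideanSpace ℝ (Fin q))
    (xmin : EuclideanSpace ℝ (Fin q) → EuclideanSpace ℝ (Fin n))
    (hxmin : ∀ lam x,
      f (xmin lam) + ∑ i, lam i * (A.mulVec (xmin lam) i - b i)
        ≤ f x + ∑ i, lam i * (A.mulVec x i - b i))
    (θ : EuclideanSpace ℝ (Fin q) → ℝ)
    (hθ : θ = fun lam => f (xmin lam) + ∑ i, lam i * (A.mulVec (xmin lam) i - b i)) :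
    ∀ lam, HasGradientAt θ
      (WithLp.toLp 2 (fun i => A.mulVec (xmin lam) i - b i : Fin q → ℝ) :
        EuclideanSpace ℝ (Fin q)) lam := by
  intro lam
  set L := LinearMap.toContinuousLinearMap (Matrix.toEuclideanLin A)
  have hL : ∀ μ (x : EuclideanSpace ℝ (Fin n)), ∑ i, μ i * (A.mulVec x i - b i) = ⟪μ, L x - b⟫ :=
    fun μ x ↦ A.sum_mul_mulVec_sub_eq_inner μ b x
  have hf : StrongConvexOn univ α f := ⟨convex_univ, fun x _ y _ s t hs ht hst ↦ by
    obtain rfl : t = 1 - s := by linarith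
    have h := hsc x y s hs (by linarith)
    simp only [smul_eq_mul, norm_sub_rev y x] at h ⊢
    linarith⟩
  simp only [hL] at hxmin hθ
  subst hθ
  have hcont : Continuous fun μ ↦ L (xmin μ) - b :=
    (L.continuous.comp (hf.lipschitzWith_lagrangian_argmin hα L b hxmin).continuous).sub
      continuous_const
  exact hasGradientAt_of_inf_attained (c := fun x ↦ L x - b) hxmin (fun μ ↦ rfl)
    hcont.continuousAt

/-- If `f` is strongly convex (constant `α > 0`) and differentiable,
and `x(λ)` is the (unique) minimizer of `x ↦ f(x) + λᵀ(Ax − b)`, then the dual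
function `θ(λ) = f(x(λ)) + λᵀ(Ax(λ) − b)` is differentiable on `ℝ^q` with
`∇θ(λ) = Ax(λ) − b`. -/
theorem dual_function_gradient
    {n q : ℕ} (f : EuclideanSpace ℝ (Fin n) → ℝ)
    (f' : EuclideanSpace ℝ (Fin n) → EuclideanSpace ℝ (Fin n))
    (hdiff : ∀ x, HasGradientAt f (f' x) x)
    (α : ℝ) (hα : 0 < α)
    (hsc : ∀ x y : EuclideanSpace ℝ (Fin n), ∀ t : ℝ, 0 ≤ t → t ≤ 1 →
      f (t • x + (1 - t) • y)
        ≤ t * f x + (1 - t) * f y - α * (t * (1 - t)) / 2 * ‖y - x‖ ^ 2)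
    (A : Matrix (Fin q) (Fin n) ℝ)
    (b : EuclideanSpace ℝ (Fin q))
    (xmin : EuclideanSpace ℝ (Fin q) → EuclideanSpace ℝ (Fin n))
    (hxmin : ∀ lam x,
      f (xmin lam) + ∑ i, lam i * (A.mulVec (xmin lam) i - b i)
        ≤ f x + ∑ i, lam i * (A.mulVec x i - b i))
    (θ : EuclideanSpace ℝ (Fin q) → ℝ)
    (hθ : θ = fun lam => f (xmin lam) + ∑ i, lam i * (A.mulVec (xmin lam) i - b i)) :
    ∀ lam, HasGradientAt θ
      (WithLp.toLp 2 (fun i => A.mulVec (xmin lam) i - b i : Fin q → ℝ) :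
        EuclideanSpace ℝ (Fin q)) lam :=
  dual_function_gradient_general f α hα hsc A b xmin hxmin θ hθ
end

section
/- Let f : ℝⁿ → ℝ be twice continuously differentiable, strongly convex on ℝⁿ with constant α > 0 with respect to the Euclidean norm, and with ∇f Lipschitz continuous on ℝⁿ. Let A be a q × n real matrix whose rows are linearly independent and b ∈ ℝ^q, and for λ ∈ ℝ^q let x(λ) be the unique minimizer of x ↦ f(x) + λᵀ(Ax − b). Then for every λ ∈ ℝ^q the matrix A[∇²f(x(λ))]⁻¹Aᵀ is positive definite and satisfies λ_min( A[∇²f(x(λ))]⁻¹Aᵀ ) ≤ λ_min(AAᵀ)/α. Consequently, if the dual function θ(λ) = inf_{x ∈ ℝⁿ} [ f(x) + λᵀ(Ax − b) ] is strongly concave on ℝ^q with constant β > 0 with respect to the Euclidean norm, then β ≤ λ_min(AAᵀ)/α. -/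
/-!
Strong convexity makes `x ↦ f x - α / 2 * ‖x‖ ^ 2` convex, so along every line its derivative is
monotone; this gives `∇²f ⪰ α I`, hence `(∇²f)⁻¹ ⪯ α⁻¹ I`, and testing `A (∇²f)⁻¹ Aᵀ` on a unit
eigenvector `u` of `A Aᵀ` for its least eigenvalue bounds `λ_min` by `uᵀ A Aᵀ u / α`.

For the dual function, `x₀ = x(0)` minimises `f`, so `θ` lies below the affine function
`λ ↦ f x₀ + λᵀ (A x₀ - b)`, with equality at `0`, while the quadratic growth of `f` around `x₀`
gives `θ d ≥ f x₀ + dᵀ (A x₀ - b) - ‖Aᵀ d‖² / (2α)`. A `β`-strongly concave function lying below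
an affine function that touches it at `0` falls below it by `β ‖d‖² / 2` at `d`, so
`β ‖d‖² ≤ ‖Aᵀ d‖² / α`; take `d = u`.
-/

open scoped Matrix

open Set Filter Topology Matrix
open scoped RealInnerProductSpace

section Convex

variable {F : Type*} [NormedAddCommGroup F] [InnerProductSpace ℝ F]

lemma hasDerivAt_add_smul (x u : F) (s : ℝ) : HasDerivAt (fun t : ℝ => x + t • u) u s := by
  simpa using ((hasDerivAt_id s).smul_const u).const_add x

lemma HasFDerivAt.hasDerivAt_comp_add_smul {h : F → ℝ} {D : F →L[ℝ] ℝ} {x u : F} {s : ℝ}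
    (hD : HasFDerivAt h D (x + s • u)) : HasDerivAt (fun t : ℝ => h (x + t • u)) (D u) s :=
  hD.comp_hasDerivAt s (hasDerivAt_add_smul x u s)

lemma ConvexOn.comp_add_smul {h : F → ℝ} (hh : ConvexOn ℝ univ h) (x u : F) :
    ConvexOn ℝ univ (fun t : ℝ => h (x + t • u)) := by
  simpa [Function.comp_def, AffineMap.lineMap_apply_module', add_comm] using
    hh.comp_affineMap (AffineMap.lineMap x (x + u))

lemma ConvexOn.add_fderiv_le {h : F → ℝ} (hh : ConvexOn ℝ univ h) {D : F →L[ℝ] ℝ} {x : F}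
    (hD : HasFDerivAt h D x) (y : F) : h x + D (y - x) ≤ h y := by
  have := (hh.comp_add_smul x (y - x)).le_slope_of_hasDerivAt (mem_univ 0) (mem_univ 1) one_pos
    (HasFDerivAt.hasDerivAt_comp_add_smul (by simpa using hD))
  simp only [slope_def_field, zero_smul, add_zero, one_smul, add_sub_cancel, sub_zero,
    div_one] at this
  linarith

lemma ConvexOn.second_fderiv_nonneg {h : F → ℝ} (hh : ConvexOn ℝ univ h) {D : F → F →L[ℝ] ℝ}
    (hD : ∀ y, HasFDerivAt h (D y) y) {D' : F →L[ℝ] F →L[ℝ] ℝ} {x : F} (hD' : HasFDerivAt D D' x)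
    (u : F) : 0 ≤ D' u u := by
  have hderiv : deriv (fun t : ℝ => h (x + t • u)) = fun s => D (x + s • u) u :=
    funext fun s => (hD _).hasDerivAt_comp_add_smul.deriv
  have hmono : Monotone fun s : ℝ => D (x + s • u) u := by
    rw [← monotoneOn_univ, ← hderiv]
    exact (hh.comp_add_smul x u).monotoneOn_deriv fun s _ =>
      (hD _).hasDerivAt_comp_add_smul.differentiableAt
  have := ((hD'.comp_hasDerivAt_of_eq 0 (hasDerivAt_add_smul x u 0) (by simp)).clm_apply
    (hasDerivAt_const 0 u)).nonneg_of_monotone hmono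
  simpa using this

lemma HasFDerivAt.sub_half_mul_norm_sq {f : F → ℝ} {D : F →L[ℝ] ℝ} {x : F} (hf : HasFDerivAt f D x)
    (m : ℝ) : HasFDerivAt (fun y => f y - m / 2 * ‖y‖ ^ 2) (D - m • innerSL ℝ x) x := by
  refine (hf.sub ((hasStrictFDerivAt_norm_sq x).hasFDerivAt.const_mul (m / 2))).congr_fderiv ?_
  ext v
  simp only [_root_.sub_apply, _root_.smul_apply, coe_innerSL_apply, nsmul_eq_mul, Nat.cast_ofNat,
    smul_eq_mul, sub_right_inj]
  ring

lemma neg_norm_sq_div_le_half_mul_norm_sq_add_inner {α : ℝ} (hα : 0 < α) (w u : F) :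
    -(‖w‖ ^ 2 / (2 * α)) ≤ α / 2 * ‖u‖ ^ 2 + ⟪w, u⟫ := by
  have hsq : 0 ≤ ‖α • u + w‖ ^ 2 := sq_nonneg _
  rw [norm_add_sq_real, norm_smul, real_inner_smul_left, real_inner_comm, Real.norm_of_nonneg hα.le,
    mul_pow] at hsq
  have hexp : (α ^ 2 * ‖u‖ ^ 2 + 2 * (α * ⟪w, u⟫) + ‖w‖ ^ 2) / (2 * α)
      = α / 2 * ‖u‖ ^ 2 + ⟪w, u⟫ + ‖w‖ ^ 2 / (2 * α) := by
    field_simp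
  linarith [div_nonneg hsq (by positivity : (0 : ℝ) ≤ 2 * α)]

variable [CompleteSpace F]

lemma LinearMap.IsSymmetric.of_hasFDerivAt_gradient {f : F → ℝ} {f' : F → F}
    (hgrad : ∀ y, HasGradientAt f (f' y) y) {H : F →L[ℝ] F} {x : F} (hH : HasFDerivAt f' H x) :
    (H : F →ₗ[ℝ] F).IsSymmetric := by
  intro v w
  have := second_derivative_symmetric (fun y => (hgrad y).hasFDerivAt)
    ((InnerProductSpace.toDual ℝ F).toContinuousLinearEquiv.toContinuousLinearMap.hasFDerivAt.comp
      x hH) v w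
  simp only [ContinuousLinearMap.comp_apply, ContinuousLinearEquiv.coe_coe,
    LinearIsometryEquiv.coe_toContinuousLinearEquiv, InnerProductSpace.toDual_apply_apply] at this
  rw [ContinuousLinearMap.coe_coe, this, real_inner_comm]

variable {f : F → ℝ} {m : ℝ}

lemma StrongConvexOn.add_inner_add_le_of_hasGradientAt (hf : StrongConvexOn univ m f) {g x : F}
    (hg : HasGradientAt f g x) (y : F) : f x + ⟪g, y - x⟫ + m / 2 * ‖y - x‖ ^ 2 ≤ f y := by
  have := (strongConvexOn_iff_convex.1 hf).add_fderiv_le (hg.hasFDerivAt.sub_half_mul_norm_sq m) y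
  simp only [_root_.sub_apply, InnerProductSpace.toDual_apply_apply, inner_sub_right,
    _root_.smul_apply, coe_innerSL_apply, real_inner_self_eq_norm_sq, smul_eq_mul] at this
  rw [norm_sub_sq_real, inner_sub_right, real_inner_comm x y]
  linarith

lemma StrongConvexOn.add_half_mul_norm_sq_le_of_isMinOn (hf : StrongConvexOn univ m f)
    {g x₀ : F} (hg : HasGradientAt f g x₀) (hmin : IsMinOn f univ x₀) (x : F) :
    f x₀ + m / 2 * ‖x - x₀‖ ^ 2 ≤ f x := by
  have hzero : g = 0 := by
    simpa using (hmin.isLocalMin univ_mem).hasFDerivAt_eq_zero hg.hasFDerivAt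
  simpa [hzero] using hf.add_inner_add_le_of_hasGradientAt hg x

lemma StrongConvexOn.mul_norm_sq_le_inner_of_hasFDerivAt_gradient (hf : StrongConvexOn univ m f)
    {f' : F → F} (hgrad : ∀ y, HasGradientAt f (f' y) y) {H : F →L[ℝ] F} {x : F}
    (hH : HasFDerivAt f' H x) (u : F) : m * ‖u‖ ^ 2 ≤ ⟪H u, u⟫ := by
  have hD' : HasFDerivAt (fun y => InnerProductSpace.toDual ℝ F (f' y) - m • innerSL ℝ y)
      ((InnerProductSpace.toDual ℝ F).toContinuousLinearEquiv.toContinuousLinearMap.comp H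
        - m • innerSL ℝ) x :=
    (InnerProductSpace.toDual ℝ F).toContinuousLinearEquiv.toContinuousLinearMap.hasFDerivAt.comp
      x hH |>.sub ((innerSL ℝ).hasFDerivAt.const_smul m)
  have := (strongConvexOn_iff_convex.1 hf).second_fderiv_nonneg
    (fun y => (hgrad y).hasFDerivAt.sub_half_mul_norm_sq m) hD' u
  simp only [_root_.sub_apply, ContinuousLinearMap.comp_apply, ContinuousLinearEquiv.coe_coe,
    LinearIsometryEquiv.coe_toContinuousLinearEquiv, _root_.smul_apply,
    InnerProductSpace.toDual_apply_apply, smul_eq_mul, sub_nonneg] at this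
  rwa [← real_inner_self_eq_norm_sq]

end Convex

section StrongConvexity

variable {E : Type*} [NormedAddCommGroup E] [NormedSpace ℝ E] {f : E → ℝ} {m : ℝ}

lemma strongConvexOn_univ_of_forall
    (h : ∀ x y : E, ∀ t : ℝ, 0 ≤ t → t ≤ 1 →
      f (t • x + (1 - t) • y) ≤ t * f x + (1 - t) * f y - m * (t * (1 - t)) / 2 * ‖y - x‖ ^ 2) :
    StrongConvexOn univ m f := by
  refine ⟨convex_univ, fun x _ y _ a b ha hb hab => ?_⟩
  obtain rfl : b = 1 - a := eq_sub_of_add_eq' hab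
  have := h x y a ha (by linarith)
  rw [norm_sub_rev] at this
  simp only [smul_eq_mul]
  linarith

lemma strongConcaveOn_univ_of_forall
    (h : ∀ x y : E, ∀ t : ℝ, 0 ≤ t → t ≤ 1 →
      t * f x + (1 - t) * f y + m * (t * (1 - t)) / 2 * ‖x - y‖ ^ 2 ≤ f (t • x + (1 - t) • y)) :
    StrongConcaveOn univ m f := by
  refine ⟨convex_univ, fun x _ y _ a b ha hb hab => ?_⟩
  obtain rfl : b = 1 - a := eq_sub_of_add_eq' hab
  have := h x y a ha (by linarith)
  simp only [smul_eq_mul]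
  linarith

lemma StrongConcaveOn.apply_add_le_of_le_affine (hf : StrongConcaveOn univ m f) {x d : E} {G : ℝ}
    (hle : ∀ s : ℝ, f (x + s • d) ≤ f x + s * G) : f (x + d) ≤ f x + G - m / 2 * ‖d‖ ^ 2 := by
  -- strong concavity on `[x, x + d]` evaluated at `x + (1 - t) • d`, then `t → 1`
  have hslope : ∀ t ∈ Ico (0 : ℝ) 1, f (x + d) ≤ f x + G - t * (m / 2 * ‖d‖ ^ 2) := by
    rintro t ⟨ht0, ht1⟩
    have hconc := hf.2 (mem_univ x) (mem_univ (x + d)) ht0 (sub_nonneg.2 ht1.le)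
      (add_sub_cancel t 1)
    have hpt : t • x + (1 - t) • (x + d) = x + (1 - t) • d := by module
    rw [hpt, show x - (x + d) = -d by abel, norm_neg] at hconc
    have := hconc.trans (hle (1 - t))
    simp only [smul_eq_mul] at this
    nlinarith
  have hlim : Tendsto (fun t : ℝ => f x + G - t * (m / 2 * ‖d‖ ^ 2)) (𝓝[<] 1)
      (𝓝 (f x + G - 1 * (m / 2 * ‖d‖ ^ 2))) :=
    (Continuous.tendsto (by fun_prop) 1).mono_left nhdsWithin_le_nhds
  rw [← one_mul (m / 2 * ‖d‖ ^ 2)]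
  exact ge_of_tendsto hlim (eventually_of_mem (Ico_mem_nhdsLT zero_lt_one) hslope)

end StrongConvexity

lemma EuclideanSpace.real_norm_sq_eq_dotProduct {ι : Type*} [Fintype ι] (v : EuclideanSpace ℝ ι) :
    ‖v‖ ^ 2 = v.ofLp ⬝ᵥ v.ofLp := by
  rw [← real_inner_self_eq_norm_sq, EuclideanSpace.inner_eq_star_dotProduct, star_trivial]

namespace Matrix

lemma dotProduct_mul_mul_transpose_mulVec {R ι κ : Type*} [CommSemiring R] [Fintype ι] [Fintype κ]
    (A : Matrix ι κ R) (Q : Matrix κ κ R) (v : ι → R) :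
    v ⬝ᵥ ((A * Q * Aᵀ) *ᵥ v) = (Aᵀ *ᵥ v) ⬝ᵥ (Q *ᵥ (Aᵀ *ᵥ v)) := by
  rw [Matrix.mul_assoc, ← mulVec_mulVec, dotProduct_mulVec v, ← mulVec_transpose, ← mulVec_mulVec]

variable {ι : Type*} [Fintype ι] {M : Matrix ι ι ℝ} {α : ℝ}

lemma posDef_of_mul_dotProduct_le (hM : M.IsHermitian) (hα : 0 < α)
    (hle : ∀ v, α * (v ⬝ᵥ v) ≤ v ⬝ᵥ (M *ᵥ v)) : M.PosDef :=
  .of_dotProduct_mulVec_pos hM fun v hv => by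
    have := dotProduct_star_self_pos_iff.2 hv
    rw [star_trivial] at this ⊢
    exact (mul_pos hα this).trans_le (hle v)

variable [DecidableEq ι]

lemma dotProduct_inv_mulVec_le_div (hα : 0 < α) (hle : ∀ v, α * (v ⬝ᵥ v) ≤ v ⬝ᵥ (M *ᵥ v))
    (hdet : IsUnit M.det) (w : ι → ℝ) : w ⬝ᵥ (M⁻¹ *ᵥ w) ≤ (w ⬝ᵥ w) / α := by
  set z := M⁻¹ *ᵥ w
  have hMz : M *ᵥ z = w := by rw [mulVec_mulVec, mul_nonsing_inv _ hdet, one_mulVec]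
  have hz := hle z
  rw [hMz] at hz
  have hsq : 0 ≤ (α • z - w) ⬝ᵥ (α • z - w) := by
    simpa using dotProduct_star_self_nonneg (α • z - w)
  simp only [sub_dotProduct, dotProduct_sub, smul_dotProduct, dotProduct_smul, smul_eq_mul,
    dotProduct_comm w z] at hsq
  rw [le_div_iff₀ hα, dotProduct_comm]
  nlinarith

lemma IsHermitian.posSemidef_sub_smul_one {N : Matrix ι ι ℝ} (hN : N.IsHermitian) {c : ℝ}
    (hc : ∀ i, c ≤ hN.eigenvalues i) : (N - c • 1).PosSemidef := by
  have hdiag : N - c • 1 = Unitary.conjStarAlgAut ℝ _ hN.eigenvectorUnitary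
      (diagonal (hN.eigenvalues - fun _ => c)) := by
    conv_lhs => rw [hN.spectral_theorem]
    rw [← map_one (Unitary.conjStarAlgAut ℝ _ hN.eigenvectorUnitary), ← map_smul, ← map_sub,
      ← diagonal_one, ← diagonal_smul, diagonal_sub]
    congr 2
    ext i
    simp only [RCLike.ofReal_real_eq_id, Function.comp_apply, id_eq, Pi.smul_apply, smul_eq_mul,
      mul_one, Pi.sub_apply]
  rw [hdiag, Unitary.conjStarAlgAut_apply, Unitary.isUnit_coe.posSemidef_star_right_conjugate_iff,
    posSemidef_diagonal_iff]
  exact fun i => sub_nonneg.2 (hc i)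

end Matrix

section LambdaMin

variable {q : ℕ} {N : Matrix (Fin q) (Fin q) ℝ}

lemma lambdaMin_mul_norm_sq_le (hN : N.IsHermitian) (v : EuclideanSpace ℝ (Fin q)) :
    lambdaMin N hN * ‖v‖ ^ 2 ≤ v.ofLp ⬝ᵥ (N *ᵥ v.ofLp) := by
  have := (hN.posSemidef_sub_smul_one fun i => ciInf_le (Finite.bddBelow_range _) i)
    |>.dotProduct_mulVec_nonneg v.ofLp
  rw [star_trivial, sub_mulVec, dotProduct_sub, smul_mulVec, one_mulVec, dotProduct_smul,
    smul_eq_mul, sub_nonneg, ← EuclideanSpace.real_norm_sq_eq_dotProduct] at this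
  exact this

lemma exists_norm_eq_one_dotProduct_mulVec_eq_lambdaMin (hq : 0 < q) (hN : N.IsHermitian) :
    ∃ u : EuclideanSpace ℝ (Fin q), ‖u‖ = 1 ∧ u.ofLp ⬝ᵥ (N *ᵥ u.ofLp) = lambdaMin N hN := by
  have : Nonempty (Fin q) := ⟨⟨0, hq⟩⟩
  obtain ⟨i, hi⟩ := Finite.exists_min hN.eigenvalues
  refine ⟨hN.eigenvectorBasis i, hN.eigenvectorBasis.orthonormal.1 i, ?_⟩
  rw [lambdaMin, le_antisymm (ciInf_le (Finite.bddBelow_range _) i) (le_ciInf hi),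
    hN.eigenvalues_eq, star_trivial]
  rfl

variable {n : ℕ} {M : Matrix (Fin n) (Fin n) ℝ} {α : ℝ}

lemma lambdaMin_mul_inv_mul_transpose_le (hq : 0 < q) (A : Matrix (Fin q) (Fin n) ℝ)
    (hP : (A * M⁻¹ * Aᵀ).IsHermitian) (hα : 0 < α) (hle : ∀ v, α * (v ⬝ᵥ v) ≤ v ⬝ᵥ (M *ᵥ v))
    (hdet : IsUnit M.det) :
    lambdaMin (A * M⁻¹ * Aᵀ) hP
      ≤ lambdaMin (A * Aᵀ) (isHermitian_mul_conjTranspose_self A) / α := by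
  obtain ⟨u, hu, hAAu⟩ := exists_norm_eq_one_dotProduct_mulVec_eq_lambdaMin (N := A * Aᵀ) hq
    (isHermitian_mul_conjTranspose_self A)
  rw [← hAAu]
  calc lambdaMin (A * M⁻¹ * Aᵀ) hP = lambdaMin (A * M⁻¹ * Aᵀ) hP * ‖u‖ ^ 2 := by simp [hu]
    _ ≤ u.ofLp ⬝ᵥ ((A * M⁻¹ * Aᵀ) *ᵥ u.ofLp) := lambdaMin_mul_norm_sq_le hP u
    _ ≤ (Aᵀ *ᵥ u.ofLp ⬝ᵥ Aᵀ *ᵥ u.ofLp) / α := by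
      rw [dotProduct_mul_mul_transpose_mulVec]
      exact dotProduct_inv_mulVec_le_div hα hle hdet _
    _ = u.ofLp ⬝ᵥ ((A * Aᵀ) *ᵥ u.ofLp) / α := by
      simpa using congrArg (· / α) (dotProduct_mul_mul_transpose_mulVec A 1 u.ofLp).symm

end LambdaMin

section Lagrangian

variable {n q : ℕ}

def lagrangian (f : EuclideanSpace ℝ (Fin n) → ℝ) (A : Matrix (Fin q) (Fin n) ℝ)
    (b lam : EuclideanSpace ℝ (Fin q)) (x : EuclideanSpace ℝ (Fin n)) : ℝ :=
  f x + lam.ofLp ⬝ᵥ (A *ᵥ x.ofLp - b.ofLp)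

variable {f : EuclideanSpace ℝ (Fin n) → ℝ} {A : Matrix (Fin q) (Fin n) ℝ}
  {b : EuclideanSpace ℝ (Fin q)}

lemma lagrangian_smul_left (s : ℝ) (d : EuclideanSpace ℝ (Fin q)) (x : EuclideanSpace ℝ (Fin n)) :
    lagrangian f A b (s • d) x = f x + s * (d.ofLp ⬝ᵥ (A *ᵥ x.ofLp - b.ofLp)) := by
  simp [lagrangian, smul_dotProduct, mul_sub]

@[simp]
lemma lagrangian_zero_left (x : EuclideanSpace ℝ (Fin n)) : lagrangian f A b 0 x = f x := by
  simp [lagrangian]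

lemma lagrangian_eq_add_inner (lam : EuclideanSpace ℝ (Fin q)) (x x₀ : EuclideanSpace ℝ (Fin n)) :
    lagrangian f A b lam x
      = lagrangian f A b lam x₀ + (f x - f x₀) + ⟪WithLp.toLp 2 (Aᵀ *ᵥ lam.ofLp), x - x₀⟫ := by
  rw [EuclideanSpace.inner_eq_star_dotProduct, star_trivial, mulVec_transpose, dotProduct_comm,
    ← dotProduct_mulVec, WithLp.ofLp_sub, mulVec_sub]
  simp only [lagrangian, dotProduct_sub]
  ring

lemma lagrangian_sub_le_of_quadratic_growth {α : ℝ} (hα : 0 < α) {x₀ : EuclideanSpace ℝ (Fin n)}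
    (hgrowth : ∀ x, f x₀ + α / 2 * ‖x - x₀‖ ^ 2 ≤ f x) (lam : EuclideanSpace ℝ (Fin q))
    (x : EuclideanSpace ℝ (Fin n)) :
    lagrangian f A b lam x₀ - lam.ofLp ⬝ᵥ ((A * Aᵀ) *ᵥ lam.ofLp) / (2 * α)
      ≤ lagrangian f A b lam x := by
  have hnorm : ‖WithLp.toLp 2 (Aᵀ *ᵥ lam.ofLp)‖ ^ 2 = lam.ofLp ⬝ᵥ ((A * Aᵀ) *ᵥ lam.ofLp) := by
    simpa [EuclideanSpace.real_norm_sq_eq_dotProduct] using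
      (dotProduct_mul_mul_transpose_mulVec A 1 lam.ofLp).symm
  have := neg_norm_sq_div_le_half_mul_norm_sq_add_inner hα (WithLp.toLp 2 (Aᵀ *ᵥ lam.ofLp)) (x - x₀)
  rw [hnorm] at this
  rw [lagrangian_eq_add_inner lam x x₀]
  linarith [hgrowth x]

lemma mul_norm_sq_le_of_strongConcaveOn_dual {α β : ℝ} (hα : 0 < α)
    {xmin : EuclideanSpace ℝ (Fin q) → EuclideanSpace ℝ (Fin n)}
    (hgrowth : ∀ x, f (xmin 0) + α / 2 * ‖x - xmin 0‖ ^ 2 ≤ f x)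
    (hxmin : ∀ lam x, lagrangian f A b lam (xmin lam) ≤ lagrangian f A b lam x)
    (hconc : StrongConcaveOn univ β fun lam => lagrangian f A b lam (xmin lam))
    (d : EuclideanSpace ℝ (Fin q)) :
    β * ‖d‖ ^ 2 ≤ d.ofLp ⬝ᵥ ((A * Aᵀ) *ᵥ d.ofLp) / α := by
  have hupper := hconc.apply_add_le_of_le_affine (x := 0) (d := d)
    (G := d.ofLp ⬝ᵥ (A *ᵥ (xmin 0).ofLp - b.ofLp)) fun s => by
      simpa [lagrangian_smul_left] using hxmin (s • d) (xmin 0)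
  have hlower := lagrangian_sub_le_of_quadratic_growth (A := A) (b := b) hα hgrowth d (xmin d)
  have hG : lagrangian f A b d (xmin 0) = f (xmin 0) + d.ofLp ⬝ᵥ (A *ᵥ (xmin 0).ofLp - b.ofLp) :=
    rfl
  rw [zero_add, lagrangian_zero_left] at hupper
  linarith [show d.ofLp ⬝ᵥ ((A * Aᵀ) *ᵥ d.ofLp) / (2 * α)
    = d.ofLp ⬝ᵥ ((A * Aᵀ) *ᵥ d.ofLp) / α / 2 by ring]

end Lagrangian

theorem dual_strong_concavity_constant_upper_bound_general
    {n q : ℕ} (hq : 0 < q)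
    (f : EuclideanSpace ℝ (Fin n) → ℝ)
    (f' : EuclideanSpace ℝ (Fin n) → EuclideanSpace ℝ (Fin n))
    (Hess : EuclideanSpace ℝ (Fin n) → Matrix (Fin n) (Fin n) ℝ)
    (hgrad : ∀ x, HasGradientAt f (f' x) x)
    (hhess : ∀ x, HasFDerivAt f' (Matrix.toEuclideanCLM (𝕜 := ℝ) (Hess x)) x)
    (α : ℝ) (hα : 0 < α)
    (hsc : ∀ x y : EuclideanSpace ℝ (Fin n), ∀ t : ℝ, 0 ≤ t → t ≤ 1 →
      f (t • x + (1 - t) • y)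
        ≤ t * f x + (1 - t) * f y - α * (t * (1 - t)) / 2 * ‖y - x‖ ^ 2)
    (A : Matrix (Fin q) (Fin n) ℝ)
    (hA : LinearIndependent ℝ A)
    (b : EuclideanSpace ℝ (Fin q))
    (xmin : EuclideanSpace ℝ (Fin q) → EuclideanSpace ℝ (Fin n))
    (hxmin : ∀ lam x,
      f (xmin lam) + ∑ i, lam i * (A.mulVec (xmin lam) i - b i)
        ≤ f x + ∑ i, lam i * (A.mulVec x i - b i))
    (θ : EuclideanSpace ℝ (Fin q) → EReal)
    (hθ : θ = fun lam => ⨅ x : EuclideanSpace ℝ (Fin n),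
      ((f x + ∑ i, lam i * (A.mulVec x i - b i) : ℝ) : EReal)) :
    (∀ lam : EuclideanSpace ℝ (Fin q),
      ∃ hpd : (A * (Hess (xmin lam))⁻¹ * Aᵀ).PosDef,
        lambdaMin (A * (Hess (xmin lam))⁻¹ * Aᵀ) hpd.1
          ≤ lambdaMin (A * Aᵀ) (Matrix.isHermitian_mul_conjTranspose_self A) / α) ∧
    (∀ β : ℝ, 0 < β →
      (∀ l1 l2 : EuclideanSpace ℝ (Fin q), ∀ r1 r2 : ℝ,
        θ l1 = (r1 : EReal) → θ l2 = (r2 : EReal) →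
        ∀ t : ℝ, 0 ≤ t → t ≤ 1 →
        ((t * r1 + (1 - t) * r2
          + β * (t * (1 - t)) / 2 * ‖l1 - l2‖ ^ 2 : ℝ) : EReal)
          ≤ θ (t • l1 + (1 - t) • l2)) →
      β ≤ lambdaMin (A * Aᵀ) (Matrix.isHermitian_mul_conjTranspose_self A) / α) := by
  have hf : StrongConvexOn univ α f := strongConvexOn_univ_of_forall hsc
  have hHess : ∀ x v, α * (v ⬝ᵥ v) ≤ v ⬝ᵥ (Hess x *ᵥ v) := fun x v => by
    simpa [EuclideanSpace.real_norm_sq_eq_dotProduct, EuclideanSpace.inner_toLp_toLp] using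
      hf.mul_norm_sq_le_inner_of_hasFDerivAt_gradient hgrad (hhess x) (WithLp.toLp 2 v)
  have hxmin' : ∀ lam x, lagrangian f A b lam (xmin lam) ≤ lagrangian f A b lam x := hxmin
  refine ⟨fun lam => ?_, fun β _ hconc => ?_⟩
  · have hM : (Hess (xmin lam)).PosDef := posDef_of_mul_dotProduct_le
      (isSymmetric_toEuclideanLin_iff.1 (.of_hasFDerivAt_gradient hgrad (hhess _))) hα (hHess _)
    have hpd : (A * (Hess (xmin lam))⁻¹ * Aᵀ).PosDef :=
      hM.inv.mul_mul_conjTranspose_same (vecMul_injective_iff.2 hA)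
    exact ⟨hpd, lambdaMin_mul_inv_mul_transpose_le hq A hpd.1 hα (hHess _) hM.det_pos.ne'.isUnit⟩
  · have hdual : ∀ lam, θ lam = lagrangian f A b lam (xmin lam) := fun lam => by
      rw [hθ]
      exact le_antisymm (iInf_le _ _) (le_iInf fun x => EReal.coe_le_coe_iff.2 (hxmin lam x))
    have hconcave : StrongConcaveOn univ β fun lam => lagrangian f A b lam (xmin lam) :=
      strongConcaveOn_univ_of_forall fun l1 l2 t ht0 ht1 => by
        have := hconc l1 l2 _ _ (hdual l1) (hdual l2) t ht0 ht1
        rwa [hdual, EReal.coe_le_coe_iff] at this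
    have hgrowth := hf.add_half_mul_norm_sq_le_of_isMinOn (hgrad (xmin 0))
      fun x _ => by simpa using hxmin' 0 x
    obtain ⟨u, hu, hAAu⟩ := exists_norm_eq_one_dotProduct_mulVec_eq_lambdaMin (N := A * Aᵀ) hq
      (isHermitian_mul_conjTranspose_self A)
    simpa [hu, hAAu] using mul_norm_sq_le_of_strongConcaveOn_dual hα hgrowth hxmin' hconcave u

/-- For `f` twice continuously differentiable, strongly convex with
constant `α > 0`, with Lipschitz gradient, and `A` with linearly independent rows,
the matrix `A[∇²f(x(λ))]⁻¹Aᵀ` is positive definite with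
`λ_min(A[∇²f(x(λ))]⁻¹Aᵀ) ≤ λ_min(AAᵀ)/α`; consequently any strong concavity
constant `β > 0` of the dual function `θ` satisfies `β ≤ λ_min(AAᵀ)/α`. -/
theorem dual_strong_concavity_constant_upper_bound
    {n q : ℕ} (hq : 0 < q)
    (f : EuclideanSpace ℝ (Fin n) → ℝ)
    (f' : EuclideanSpace ℝ (Fin n) → EuclideanSpace ℝ (Fin n))
    (Hess : EuclideanSpace ℝ (Fin n) → Matrix (Fin n) (Fin n) ℝ)
    (hf : ContDiff ℝ 2 f)
    (hgrad : ∀ x, HasGradientAt f (f' x) x)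
    (hhess : ∀ x, HasFDerivAt f' (Matrix.toEuclideanCLM (𝕜 := ℝ) (Hess x)) x)
    (α : ℝ) (hα : 0 < α)
    (hsc : ∀ x y : EuclideanSpace ℝ (Fin n), ∀ t : ℝ, 0 ≤ t → t ≤ 1 →
      f (t • x + (1 - t) • y)
        ≤ t * f x + (1 - t) * f y - α * (t * (1 - t)) / 2 * ‖y - x‖ ^ 2)
    (L : ℝ) (hLip : ∀ x y, ‖f' y - f' x‖ ≤ L * ‖y - x‖)
    (A : Matrix (Fin q) (Fin n) ℝ)
    (hA : LinearIndependent ℝ A)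
    (b : EuclideanSpace ℝ (Fin q))
    (xmin : EuclideanSpace ℝ (Fin q) → EuclideanSpace ℝ (Fin n))
    (hxmin : ∀ lam x,
      f (xmin lam) + ∑ i, lam i * (A.mulVec (xmin lam) i - b i)
        ≤ f x + ∑ i, lam i * (A.mulVec x i - b i))
    (θ : EuclideanSpace ℝ (Fin q) → EReal)
    (hθ : θ = fun lam => ⨅ x : EuclideanSpace ℝ (Fin n),
      ((f x + ∑ i, lam i * (A.mulVec x i - b i) : ℝ) : EReal)) :
    (∀ lam : EuclideanSpace ℝ (Fin q),
      ∃ hpd : (A * (Hess (xmin lam))⁻¹ * Aᵀ).PosDef,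
        lambdaMin (A * (Hess (xmin lam))⁻¹ * Aᵀ) hpd.1
          ≤ lambdaMin (A * Aᵀ) (Matrix.isHermitian_mul_conjTranspose_self A) / α) ∧
    (∀ β : ℝ, 0 < β →
      (∀ l1 l2 : EuclideanSpace ℝ (Fin q), ∀ r1 r2 : ℝ,
        θ l1 = (r1 : EReal) → θ l2 = (r2 : EReal) →
        ∀ t : ℝ, 0 ≤ t → t ≤ 1 →
        ((t * r1 + (1 - t) * r2
          + β * (t * (1 - t)) / 2 * ‖l1 - l2‖ ^ 2 : ℝ) : EReal)
          ≤ θ (t • l1 + (1 - t) • l2)) →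
      β ≤ lambdaMin (A * Aᵀ) (Matrix.isHermitian_mul_conjTranspose_self A) / α) :=
  dual_strong_concavity_constant_upper_bound_general hq f f' Hess hgrad hhess α hα hsc A hA b xmin
    hxmin θ hθ
end

section
/- Let f : ℝⁿ → ℝ, A a q × n real matrix, b ∈ ℝ^q, and let θ(λ) = inf_{x ∈ ℝⁿ} [ f(x) + λᵀ(Ax − b) ] be the dual function. If θ is strongly concave on ℝ^q (with some constant α > 0 with respect to the Euclidean norm) and 0 belongs to the effective domain of the Legendre–Fenchel conjugate f* (i.e., f is bounded below), then Ker(Aᵀ) = {0}, i.e., the rows of A are linearly independent. -/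
/-!
On `ker Aᵀ` the Lagrangian term `μᵀ(Ax - b)` collapses to `-μᵀb`, so there the dual function is
the affine function `μ ↦ inf f - μᵀb`, finite because `f` is bounded below. An affine function is
convex, and a function that is both convex and strongly concave on a convex set forces that set
to be a single point; hence `ker Aᵀ = 0`.
-/

open Set
open scoped Matrix

theorem EReal.coe_ciInf {ι : Sort*} [Nonempty ι] {f : ι → ℝ} (hf : BddBelow (range f)) :
    ((⨅ i, f i : ℝ) : EReal) = ⨅ i, (f i : EReal) := by
  apply le_antisymm
  · exact le_iInf fun i => EReal.coe_le_coe_iff.2 (ciInf_le hf i)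
  · apply le_of_forall_gt_imp_ge_of_dense
    intro a ha
    induction a using EReal.rec with
    | bot => exact absurd ha (by simp)
    | top => exact le_top
    | coe r =>
      obtain ⟨i, hi⟩ := exists_lt_of_ciInf_lt (EReal.coe_lt_coe_iff.1 ha)
      exact iInf_le_of_le i (by exact_mod_cast hi.le)

theorem EReal.iInf_coe_add_const {ι : Sort*} [Nonempty ι] {f : ι → ℝ} (hf : BddBelow (range f))
    (c : ℝ) : ⨅ i, ((f i + c : ℝ) : EReal) = ((⨅ i, f i) + c : ℝ) := by
  obtain ⟨a, ha⟩ := hf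
  have hfc : BddBelow (range fun i => f i + c) :=
    ⟨a + c, forall_mem_range.2 fun i => add_le_add_left (ha ⟨i, rfl⟩) c⟩
  rw [← EReal.coe_ciInf hfc]
  exact congrArg _ ((OrderIso.addRight c).map_ciInf ⟨a, ha⟩).symm

section

variable {E : Type*} [NormedAddCommGroup E] [NormedSpace ℝ E]

/-- Strong concavity of an extended-real function, imposed only between points where it is
finite. -/
def StrongConcaveOnDom (m : ℝ) (θ : E → EReal) : Prop :=
  ∀ x y : E, ∀ r s : ℝ, θ x = r → θ y = s → ∀ t : ℝ, 0 ≤ t → t ≤ 1 →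
    ((t * r + (1 - t) * s + m * (t * (1 - t)) / 2 * ‖x - y‖ ^ 2 : ℝ) : EReal) ≤
      θ (t • x + (1 - t) • y)

theorem StrongConcaveOnDom.strongConcaveOn {m : ℝ} {θ : E → EReal} {s : Set E} {g : E → ℝ}
    (hθ : StrongConcaveOnDom m θ) (hs : Convex ℝ s) (hg : ∀ x ∈ s, θ x = g x) :
    StrongConcaveOn s m g := by
  refine ⟨hs, fun x hx y hy a b ha hb hab => ?_⟩
  obtain rfl : b = 1 - a := by linarith
  have h := hθ x y _ _ (hg x hx) (hg y hy) a ha (by linarith)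
  rw [hg _ (hs hx hy ha hb (by ring))] at h
  simp only [smul_eq_mul]
  have := EReal.coe_le_coe_iff.1 h
  linarith

theorem StrongConcaveOn.subsingleton_of_convexOn {m : ℝ} {s : Set E} {g : E → ℝ}
    (hconc : StrongConcaveOn s m g) (hconv : ConvexOn ℝ s g) (hm : 0 < m) : s.Subsingleton := by
  intro x hx y hy
  have hhalf : (0 : ℝ) ≤ 1 / 2 := by norm_num
  have hupper := hconv.2 hx hy hhalf hhalf (by norm_num)
  have hlower := hconc.2 hx hy hhalf hhalf (by norm_num)
  have hnorm : ‖x - y‖ ^ 2 ≤ 0 := by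
    simp only [smul_eq_mul] at hupper hlower
    nlinarith
  have : ‖x - y‖ = 0 := by nlinarith [norm_nonneg (x - y)]
  exact sub_eq_zero.1 (norm_eq_zero.1 this)

end

theorem Matrix.dotProduct_mulVec_sub_of_vecMul_eq_zero {m n R : Type*} [Fintype m] [Fintype n]
    [CommRing R] {A : Matrix m n R} {μ : m → R} (hμ : μ ᵥ* A = 0) (x : n → R) (b : m → R) :
    μ ⬝ᵥ (A *ᵥ x - b) = -(μ ⬝ᵥ b) := by
  rw [dotProduct_sub, dotProduct_mulVec, hμ, zero_dotProduct, zero_sub]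

theorem convexOn_const_add_neg_dotProduct {ι : Type*} [Fintype ι] {s : Set (EuclideanSpace ℝ ι)}
    (hs : Convex ℝ s) (c : ℝ) (b : ι → ℝ) :
    ConvexOn ℝ s fun μ => c + -(μ.ofLp ⬝ᵥ b) := by
  refine ⟨hs, fun x _ y _ a b' _ _ hab => le_of_eq ?_⟩
  simp only [WithLp.ofLp_add, WithLp.ofLp_smul, add_dotProduct, smul_dotProduct, smul_eq_mul]
  linear_combination (-c) * hab

/-- If the dual function `θ(λ) = inf_x [f(x) + λᵀ(Ax − b)]` is
strongly concave on `ℝ^q` with some constant `α > 0` (Euclidean norm) and `f` is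
bounded below (i.e. `0 ∈ dom f*`), then `Ker(Aᵀ) = {0}`, i.e. the rows of `A`
are linearly independent. -/
theorem rows_linearly_independent_of_dual_strongly_concave
    {n q : ℕ} (f : EuclideanSpace ℝ (Fin n) → ℝ)
    (A : Matrix (Fin q) (Fin n) ℝ)
    (b : EuclideanSpace ℝ (Fin q))
    (θ : EuclideanSpace ℝ (Fin q) → EReal)
    (hθ : θ = fun lam => ⨅ x : EuclideanSpace ℝ (Fin n),
      ((f x + ∑ i, lam i * (A.mulVec x i - b i) : ℝ) : EReal))
    (hbdd : BddBelow (Set.range f))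
    (α : ℝ) (hα : 0 < α)
    (hsc : ∀ l1 l2 : EuclideanSpace ℝ (Fin q), ∀ r1 r2 : ℝ,
      θ l1 = (r1 : EReal) → θ l2 = (r2 : EReal) →
      ∀ t : ℝ, 0 ≤ t → t ≤ 1 →
      ((t * r1 + (1 - t) * r2
        + α * (t * (1 - t)) / 2 * ‖l1 - l2‖ ^ 2 : ℝ) : EReal)
        ≤ θ (t • l1 + (1 - t) • l2)) :
    (∀ lam : Fin q → ℝ, Aᵀ.mulVec lam = 0 → lam = 0) ∧ LinearIndependent ℝ A := by
  set K := LinearMap.ker (Matrix.toLpLin 2 2 Aᵀ)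
  have hmemK : ∀ μ, μ ∈ K ↔ Aᵀ *ᵥ μ.ofLp = 0 := fun μ => by
    rw [LinearMap.mem_ker, Matrix.toLpLin_apply, WithLp.toLp_eq_zero]
  have hdual : ∀ μ ∈ K, θ μ = ((⨅ x, f x) + -(μ.ofLp ⬝ᵥ b.ofLp) : ℝ) := by
    intro μ hμ
    rw [hmemK, Matrix.mulVec_transpose] at hμ
    rw [hθ, ← EReal.iInf_coe_add_const hbdd]
    congr! 3 with x
    exact congrArg (f x + ·) (Matrix.dotProduct_mulVec_sub_of_vecMul_eq_zero hμ _ _)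
  have hsc' : StrongConcaveOnDom α θ := hsc
  have hK : (K : Set (EuclideanSpace ℝ (Fin q))).Subsingleton :=
    (hsc'.strongConcaveOn K.convex hdual).subsingleton_of_convexOn
      (convexOn_const_add_neg_dotProduct K.convex _ _) hα
  have hker : ∀ lam : Fin q → ℝ, Aᵀ *ᵥ lam = 0 → lam = 0 := fun lam hlam =>
    congrArg WithLp.ofLp (hK ((hmemK _).2 hlam) K.zero_mem)
  refine ⟨hker, Matrix.vecMul_injective_iff.1 ((injective_iff_map_eq_zero A.vecMulLinear).2 ?_)⟩
  intro lam hlam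
  exact hker lam (by simpa [Matrix.mulVec_transpose] using hlam)
end

section
/- Let Q₀ be an n × n nonzero positive semidefinite real matrix, a₀ ∈ Im(Q₀), b₀ ∈ ℝ, and f(x) = ½ xᵀQ₀x + a₀ᵀx + b₀. Then the Legendre–Fenchel conjugate of f is f*(x) = −b₀ + ½(x − a₀)ᵀQ₀⁺(x − a₀) if x ∈ Im(Q₀), and f*(x) = +∞ otherwise, where Q₀⁺ is the Moore–Penrose pseudoinverse of Q₀. -/
/-!
With `c = y - a₀` the objective is `⟨c, x⟩ - ½ xᵀQx - b₀`. If `c = Qw`, completing the square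
gives `⟨c, x⟩ - ½ xᵀQx = ½ wᵀQw - ½ (x - w)ᵀQ(x - w)`, so the supremum is attained at `x = w`
and equals `½ wᵀQw = ½ cᵀQ⁺c` because `QQ⁺Q = Q`. If `c ∉ Im Q`, the Fredholm alternative gives
`q` with `qᵀQ = 0` and `⟨q, c⟩ = 1`, and along the ray `t • q` the objective is `t - b₀`.
-/

open scoped Matrix

theorem EReal.iSup_coe_eq_of_forall_le {α : Type*} {g : α → ℝ} {x₀ : α}
    (h : ∀ x, g x ≤ g x₀) : ⨆ x, (g x : EReal) = g x₀ :=
  le_antisymm (iSup_le fun x => EReal.coe_le_coe (h x)) (le_iSup (fun x => (g x : EReal)) x₀)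

theorem EReal.iSup_coe_eq_top_of_forall_exists_lt {α : Type*} {g : α → ℝ}
    (h : ∀ r, ∃ x, r < g x) : ⨆ x, (g x : EReal) = ⊤ :=
  (EReal.eq_top_iff_forall_lt _).2 fun r =>
    lt_iSup_iff.2 <| (h r).imp fun _ => EReal.coe_lt_coe

namespace Matrix

theorem exists_vecMul_eq_zero_dotProduct_eq_one {ι m K : Type*} [Fintype ι] [Fintype m]
    [Field K] (A : Matrix m ι K) {c : m → K} (hc : c ∉ Set.range A.mulVec) :
    ∃ q : m → K, q ᵥ* A = 0 ∧ q ⬝ᵥ c = 1 := by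
  classical
  obtain ⟨φ, hφc, hφA⟩ := Submodule.exists_dual_map_eq_bot_of_notMem
    (p := LinearMap.range A.mulVecLin) (by simpa using hc) inferInstance
  obtain ⟨p, rfl⟩ := (dotProductEquiv K m).surjective φ
  have hpA : p ᵥ* A = 0 := by
    ext j
    have := (Submodule.eq_bot_iff _).1 hφA _
      (Submodule.mem_map_of_mem (LinearMap.mem_range_self A.mulVecLin (Pi.single j 1)))
    rwa [dotProductEquiv_apply_apply, mulVecLin_apply, dotProduct_mulVec, dotProduct_single,
      mul_one] at this
  refine ⟨(p ⬝ᵥ c)⁻¹ • p, by rw [smul_vecMul, hpA, smul_zero], ?_⟩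
  simpa using inv_mul_cancel₀ hφc

variable {ι : Type*} [Fintype ι] {Q : Matrix ι ι ℝ}

theorem IsSymm.mulVec_dotProduct (hQ : Q.IsSymm) (v w : ι → ℝ) :
    Q *ᵥ v ⬝ᵥ w = v ⬝ᵥ Q *ᵥ w := by
  rw [← vecMul_transpose, hQ.eq, dotProduct_mulVec]

theorem PosSemidef.dotProduct_sub_half_le_of_mulVec_eq (hQ : Q.PosSemidef) {c w : ι → ℝ}
    (hw : Q *ᵥ w = c) (x : ι → ℝ) :
    c ⬝ᵥ x - x ⬝ᵥ Q *ᵥ x / 2 ≤ c ⬝ᵥ w - w ⬝ᵥ Q *ᵥ w / 2 := by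
  subst hw
  have hQ' : Q.IsSymm := isHermitian_iff_isSymm.1 hQ.isHermitian
  have hsq := hQ.dotProduct_mulVec_nonneg (x - w)
  simp only [star_trivial, mulVec_sub, sub_dotProduct, dotProduct_sub] at hsq
  linarith [hQ'.mulVec_dotProduct w x, hQ'.mulVec_dotProduct x w, dotProduct_comm (Q *ᵥ w) x,
    dotProduct_comm (Q *ᵥ x) w, dotProduct_comm (Q *ᵥ w) w]

theorem IsSymm.mulVec_dotProduct_mulVec_mulVec (hQ : Q.IsSymm) {G : Matrix ι ι ℝ}
    (hG : Q * G * Q = Q) (w : ι → ℝ) : Q *ᵥ w ⬝ᵥ G *ᵥ (Q *ᵥ w) = w ⬝ᵥ Q *ᵥ w := by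
  rw [hQ.mulVec_dotProduct, mulVec_mulVec, mulVec_mulVec, hG]

theorem exists_lt_dotProduct_sub_half_of_notMem_range {c : ι → ℝ}
    (hc : c ∉ Set.range Q.mulVec) (r : ℝ) : ∃ x, r < c ⬝ᵥ x - x ⬝ᵥ Q *ᵥ x / 2 := by
  obtain ⟨q, hqQ, hqc⟩ := Q.exists_vecMul_eq_zero_dotProduct_eq_one hc
  refine ⟨(r + 1) • q, ?_⟩
  rw [dotProduct_mulVec, smul_vecMul, hqQ, smul_zero, zero_dotProduct, dotProduct_smul,
    dotProduct_comm, hqc]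
  simp

end Matrix

theorem conjugate_of_convex_quadratic_general
    {n : ℕ} (Q : Matrix (Fin n) (Fin n) ℝ)
    (hQ : Q.PosSemidef)
    (a0 : Fin n → ℝ) (ha0 : ∃ u : Fin n → ℝ, Q.mulVec u = a0) (b0 : ℝ)
    (f : EuclideanSpace ℝ (Fin n) → ℝ)
    (hf : f = fun x : EuclideanSpace ℝ (Fin n) =>
      (1 / 2) * (∑ i, x i * Q.mulVec (WithLp.ofLp x) i) + (∑ i, a0 i * x i) + b0)
    -- `Qp` is the Moore–Penrose pseudoinverse of `Q`
    (Qp : Matrix (Fin n) (Fin n) ℝ)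
    (hQp1 : Q * Qp * Q = Q)
    (fstar : EuclideanSpace ℝ (Fin n) → EReal)
    (hfstar : fstar = fun y => ⨆ x : EuclideanSpace ℝ (Fin n),
      ((∑ j, y j * x j - f x : ℝ) : EReal)) :
    ∀ y : EuclideanSpace ℝ (Fin n),
      ((∃ u : Fin n → ℝ, ∀ j, Q.mulVec u j = y j) →
        fstar y = ((-b0 + (1 / 2) *
          ∑ i, (y i - a0 i) * Qp.mulVec (fun j => y j - a0 j) i : ℝ) : EReal)) ∧
      ((¬ ∃ u : Fin n → ℝ, ∀ j, Q.mulVec u j = y j) → fstar y = ⊤) := by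
  intro y
  obtain ⟨v, rfl⟩ := ha0
  set c : Fin n → ℝ := y.ofLp - Q *ᵥ v
  have hfstar_y : fstar y = ⨆ x : EuclideanSpace ℝ (Fin n),
      ((c ⬝ᵥ x.ofLp - x.ofLp ⬝ᵥ Q *ᵥ x.ofLp / 2 - b0 : ℝ) : EReal) := by
    subst hf hfstar
    congr! 3 with x
    simp only [c, dotProduct, Pi.sub_apply, sub_mul, Finset.sum_sub_distrib]
    ring
  have hrange : (∃ u : Fin n → ℝ, ∀ j, (Q *ᵥ u) j = y j) ↔ c ∈ Set.range Q.mulVec := by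
    refine ⟨fun ⟨u, hu⟩ => ⟨u - v, ?_⟩, fun ⟨w, hw⟩ => ⟨w + v, fun j => ?_⟩⟩
    · ext j; simp [c, Matrix.mulVec_sub, hu]
    · simp [Matrix.mulVec_add, hw, c]
  refine ⟨fun hy => ?_, fun hy => ?_⟩
  · obtain ⟨w, hw⟩ := hrange.1 hy
    have hsymm : Q.IsSymm := Matrix.isHermitian_iff_isSymm.1 hQ.isHermitian
    rw [hfstar_y]
    refine (EReal.iSup_coe_eq_of_forall_le (x₀ := WithLp.toLp 2 w) fun x => ?_).trans ?_
    · simpa using hQ.dotProduct_sub_half_le_of_mulVec_eq hw x.ofLp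
    · congr 1
      change c ⬝ᵥ w - w ⬝ᵥ Q *ᵥ w / 2 - b0 = -b0 + 1 / 2 * c ⬝ᵥ Qp *ᵥ c
      rw [← hw, hsymm.mulVec_dotProduct_mulVec_mulVec hQp1, dotProduct_comm]
      ring
  · rw [hfstar_y]
    refine EReal.iSup_coe_eq_top_of_forall_exists_lt fun r => ?_
    obtain ⟨x, hx⟩ :=
      Matrix.exists_lt_dotProduct_sub_half_of_notMem_range (hrange.not.1 hy) (r + b0)
    exact ⟨WithLp.toLp 2 x, by linarith⟩

/-- For `f(x) = ½xᵀQ₀x + a₀ᵀx + b₀` with `Q₀ ≠ 0` positive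
semidefinite and `a₀ ∈ Im(Q₀)`, the Legendre–Fenchel conjugate is
`f*(x) = −b₀ + ½(x−a₀)ᵀQ₀⁺(x−a₀)` on `Im(Q₀)` and `+∞` elsewhere, where the
Moore–Penrose pseudoinverse `Q₀⁺` is characterized by the four Penrose
identities. -/
theorem conjugate_of_convex_quadratic
    {n : ℕ} (Q : Matrix (Fin n) (Fin n) ℝ)
    (hQ : Q.PosSemidef) (hQ0 : Q ≠ 0)
    (a0 : Fin n → ℝ) (ha0 : ∃ u : Fin n → ℝ, Q.mulVec u = a0) (b0 : ℝ)
    (f : EuclideanSpace ℝ (Fin n) → ℝ)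
    (hf : f = fun x : EuclideanSpace ℝ (Fin n) =>
      (1 / 2) * (∑ i, x i * Q.mulVec (WithLp.ofLp x) i) + (∑ i, a0 i * x i) + b0)
    -- `Qp` is the Moore–Penrose pseudoinverse of `Q`
    (Qp : Matrix (Fin n) (Fin n) ℝ)
    (hQp1 : Q * Qp * Q = Q) (hQp2 : Qp * Q * Qp = Qp)
    (hQp3 : (Q * Qp)ᵀ = Q * Qp) (hQp4 : (Qp * Q)ᵀ = Qp * Q)
    (fstar : EuclideanSpace ℝ (Fin n) → EReal)
    (hfstar : fstar = fun y => ⨆ x : EuclideanSpace ℝ (Fin n),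
      ((∑ j, y j * x j - f x : ℝ) : EReal)) :
    ∀ y : EuclideanSpace ℝ (Fin n),
      ((∃ u : Fin n → ℝ, ∀ j, Q.mulVec u j = y j) →
        fstar y = ((-b0 + (1 / 2) *
          ∑ i, (y i - a0 i) * Qp.mulVec (fun j => y j - a0 j) i : ℝ) : EReal)) ∧
      ((¬ ∃ u : Fin n → ℝ, ∀ j, Q.mulVec u j = y j) → fstar y = ⊤) :=
  conjugate_of_convex_quadratic_general Q hQ a0 ha0 b0 f hf Qp hQp1 fstar hfstar
end

section
/- Let Q₀ be an n × n nonzero positive semidefinite real matrix, a₀ ∈ Im(Q₀), b₀ ∈ ℝ, and f(x) = ½ xᵀQ₀x + a₀ᵀx + b₀. Then the Legendre–Fenchel conjugate f* (equal to −b₀ + ½(x − a₀)ᵀQ₀⁺(x − a₀) on Im(Q₀) and +∞ elsewhere) is strongly convex on ℝⁿ with constant of strong convexity 1/λ_max(Q₀) with respect to the Euclidean norm. -/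
/-!
On its effective domain `a + range T`, the conjugate of `f x = ½⟪x, T x⟫ + ⟪a, x⟫ + b` is
`f* y = ½⟪u, T u⟫ - b` for any `u` with `T u = y - a` (complete the square); off that domain
`f* = ⊤`, because `range T = (ker T)ᗮ` and `f` is affine along `ker T`. Convex combinations of
points `yᵢ = T uᵢ + a` are realised by the same combinations of the `uᵢ`, and the convexity
defect of `u ↦ ½⟪u, T u⟫` is `st/2 ⟪u₁ - u₂, T (u₁ - u₂)⟫`. Since the eigenvalues of `T` lie in
`[0, λ]`, this dominates `st/(2λ) ‖T (u₁ - u₂)‖² = st/(2λ) ‖y₁ - y₂‖²`.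
-/

open scoped InnerProductSpace

section Conjugate

variable {E : Type*} [NormedAddCommGroup E] [InnerProductSpace ℝ E]

noncomputable def fenchelConjugate (f : E → ℝ) (y : E) : EReal :=
  ⨆ x, ((⟪y, x⟫_ℝ - f x : ℝ) : EReal)

noncomputable def quadraticFun (T : E →ₗ[ℝ] E) (a : E) (b : ℝ) (x : E) : ℝ :=
  2⁻¹ * ⟪x, T x⟫_ℝ + ⟪a, x⟫_ℝ + b

theorem LinearMap.inner_map_self_smul_add_smul (T : E →ₗ[ℝ] E) (u v : E) {s t : ℝ}
    (hst : s + t = 1) :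
    ⟪s • u + t • v, T (s • u + t • v)⟫_ℝ
      = s * ⟪u, T u⟫_ℝ + t * ⟪v, T v⟫_ℝ - s * t * ⟪u - v, T (u - v)⟫_ℝ := by
  simp only [map_add, map_sub, map_smul, inner_add_left, inner_add_right, inner_sub_left,
    inner_sub_right, real_inner_smul_left, real_inner_smul_right]
  obtain rfl : t = 1 - s := by linarith
  ring

namespace LinearMap.IsSymmetric

variable {T : E →ₗ[ℝ] E}

theorem exists_mem_ker_inner_ne_zero [FiniteDimensional ℝ E] (hT : T.IsSymmetric) {d : E}
    (hd : d ∉ LinearMap.range T) : ∃ w ∈ LinearMap.ker T, ⟪w, d⟫_ℝ ≠ 0 := by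
  rw [← Submodule.orthogonal_orthogonal (LinearMap.range T), hT.orthogonal_range] at hd
  simpa [Submodule.mem_orthogonal] using hd

theorem inv_mul_norm_apply_sq_le {ι : Type*} [Fintype ι] (hT : T.IsSymmetric)
    (e : OrthonormalBasis ι ℝ E) {μ : ι → ℝ} (he : ∀ i, T (e i) = μ i • e i)
    (hμ : ∀ i, 0 ≤ μ i) {c : ℝ} (hc : ∀ i, μ i ≤ c) (v : E) :
    c⁻¹ * ‖T v‖ ^ 2 ≤ ⟪v, T v⟫_ℝ := by
  have hcoord : ∀ i, ⟪e i, T v⟫_ℝ = μ i * ⟪e i, v⟫_ℝ := fun i ↦ by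
    rw [← hT, he, real_inner_smul_left]
  rw [← real_inner_self_eq_norm_sq, ← e.sum_inner_mul_inner, ← e.sum_inner_mul_inner,
    Finset.mul_sum]
  refine Finset.sum_le_sum fun i _ ↦ ?_
  rw [real_inner_comm (e i) (T v), real_inner_comm (e i) v, hcoord]
  have hμc : c⁻¹ * μ i ^ 2 ≤ μ i := by
    rcases (hμ i).trans (hc i) |>.eq_or_lt with hc0 | hc0
    -- here `μ i = 0` and `c⁻¹ = 0⁻¹ = 0`
    · simp [← hc0, hμ i]
    · rw [inv_mul_le_iff₀ hc0, sq]
      exact mul_le_mul_of_nonneg_right (hc i) (hμ i)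
  nlinarith [mul_le_mul_of_nonneg_right hμc (sq_nonneg ⟪e i, v⟫_ℝ)]

end LinearMap.IsSymmetric

section Quadratic

variable (T : E →ₗ[ℝ] E) (a : E) (b : ℝ)

theorem fenchelConjugate_quadraticFun_of_apply_eq (hT : T.IsPositive) {u y : E}
    (hu : T u = y - a) :
    fenchelConjugate (quadraticFun T a b) y = ((2⁻¹ * ⟪u, T u⟫_ℝ - b : ℝ) : EReal) := by
  have hsquare : ∀ x, ⟪y, x⟫_ℝ - quadraticFun T a b x
      = 2⁻¹ * ⟪u, T u⟫_ℝ - b - 2⁻¹ * ⟪x - u, T (x - u)⟫_ℝ := fun x ↦ by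
    rw [eq_add_of_sub_eq' hu.symm]
    simp only [quadraticFun, map_sub, inner_add_left, inner_sub_left, inner_sub_right,
      real_inner_comm (T u) x, hT.isSymmetric u x]
    ring
  refine le_antisymm (iSup_le fun x ↦ ?_) (le_iSup_of_le u ?_)
  · rw [hsquare, EReal.coe_le_coe_iff]
    linarith [hT.inner_nonneg_right (x - u)]
  · simp [hsquare]

theorem fenchelConjugate_quadraticFun_eq_top [FiniteDimensional ℝ E] (hT : T.IsSymmetric)
    {y : E} (hy : y - a ∉ LinearMap.range T) : fenchelConjugate (quadraticFun T a b) y = ⊤ := by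
  obtain ⟨w, hw, hwy⟩ := hT.exists_mem_ker_inner_ne_zero hy
  have hline : ∀ s : ℝ, ⟪y, s • w⟫_ℝ - quadraticFun T a b (s • w) = s * ⟪w, y - a⟫_ℝ - b :=
    fun s ↦ by
      simp only [quadraticFun, map_smul, LinearMap.mem_ker.1 hw, smul_zero, inner_zero_right,
        real_inner_smul_right, inner_sub_right, real_inner_comm w]
      ring
  refine (EReal.eq_top_iff_forall_lt _).2 fun r ↦
    lt_iSup_iff.2 ⟨((r + b + 1) / ⟪w, y - a⟫_ℝ) • w, ?_⟩
  rw [hline, div_mul_cancel₀ _ hwy]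
  exact_mod_cast (by linarith : r < r + b + 1 - b)

theorem fenchelConjugate_quadraticFun_ne_top_iff [FiniteDimensional ℝ E] (hT : T.IsPositive)
    {y : E} : fenchelConjugate (quadraticFun T a b) y ≠ ⊤ ↔ y - a ∈ LinearMap.range T := by
  refine ⟨fun h ↦ not_not.1 fun hy ↦ h ?_, fun ⟨u, hu⟩ ↦ ?_⟩
  · exact fenchelConjugate_quadraticFun_eq_top T a b hT.isSymmetric hy
  · rw [fenchelConjugate_quadraticFun_of_apply_eq T a b hT hu]
    exact EReal.coe_ne_top _

theorem strongConvexOn_fenchelConjugate_quadraticFun [FiniteDimensional ℝ E]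
    (hT : T.IsPositive) {m : ℝ} (hm : ∀ v, m * ‖T v‖ ^ 2 ≤ ⟪v, T v⟫_ℝ) :
    StrongConvexOn {y | fenchelConjugate (quadraticFun T a b) y ≠ ⊤} m
      (fun y ↦ (fenchelConjugate (quadraticFun T a b) y).toReal) := by
  have hcomb : ∀ {u v y₁ y₂ : E} {s t : ℝ}, T u = y₁ - a → T v = y₂ - a → s + t = 1 →
      T (s • u + t • v) = s • y₁ + t • y₂ - a := fun hu hv hst ↦ by
    rw [map_add, map_smul, map_smul, hu, hv]
    linear_combination (norm := module) -(hst • a)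
  simp only [fenchelConjugate_quadraticFun_ne_top_iff T a b hT]
  refine ⟨fun y₁ ⟨u, hu⟩ y₂ ⟨v, hv⟩ s t _ _ hst ↦ ⟨_, hcomb hu hv hst⟩, ?_⟩
  rintro y₁ ⟨u, hu⟩ y₂ ⟨v, hv⟩ s t hs ht hst
  have hdiff : y₁ - y₂ = T (u - v) := by rw [map_sub, hu, hv]; abel
  simp only [fenchelConjugate_quadraticFun_of_apply_eq T a b hT hu,
    fenchelConjugate_quadraticFun_of_apply_eq T a b hT hv,
    fenchelConjugate_quadraticFun_of_apply_eq T a b hT (hcomb hu hv hst), EReal.toReal_coe,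
    smul_eq_mul, hdiff, T.inner_map_self_smul_add_smul u v hst]
  have hb : b = s * b + t * b := by rw [← add_mul, hst, one_mul]
  linarith [mul_le_mul_of_nonneg_left (hm (u - v)) (mul_nonneg hs ht)]

end Quadratic

end Conjugate

theorem conjugate_of_convex_quadratic_strongly_convex_general
    {n : ℕ} (Q : Matrix (Fin n) (Fin n) ℝ)
    (hQ : Q.PosSemidef)
    (a0 : Fin n → ℝ) (b0 : ℝ)
    (f : EuclideanSpace ℝ (Fin n) → ℝ)
    (hf : f = fun x : EuclideanSpace ℝ (Fin n) => (1 / 2) * (∑ i, x i * Q.mulVec (WithLp.ofLp x) i) + (∑ i, a0 i * x i) + b0)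
    (fstar : EuclideanSpace ℝ (Fin n) → EReal)
    (hfstar : fstar = fun y => ⨆ x : EuclideanSpace ℝ (Fin n),
      ((∑ j, y j * x j - f x : ℝ) : EReal))
    (lamMax : ℝ) (hlamMax : lamMax = ⨆ i, hQ.1.eigenvalues i) :
    ∀ x y : EuclideanSpace ℝ (Fin n), fstar x ≠ ⊤ → fstar y ≠ ⊤ →
      ∀ t : ℝ, 0 ≤ t → t ≤ 1 →
      fstar (t • x + (1 - t) • y)
        ≤ ((t * (fstar x).toReal + (1 - t) * (fstar y).toReal
            - (1 / lamMax) * (t * (1 - t)) / 2 * ‖y - x‖ ^ 2 : ℝ) : EReal) := by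
  set T := Matrix.toEuclideanLin Q
  have hT : T.IsPositive := Matrix.isPositive_toEuclideanLin_iff.2 hQ
  have hfT : f = quadraticFun T (WithLp.toLp 2 a0) b0 := by
    subst hf
    funext x
    simp [quadraticFun, T, PiLp.inner_apply, Matrix.toLpLin_apply, mul_comm]
  have hfstar_eq : fstar = fenchelConjugate f := by
    subst hfstar
    funext y
    simp [fenchelConjugate, PiLp.inner_apply, mul_comm]
  have hm : ∀ v, 1 / lamMax * ‖T v‖ ^ 2 ≤ ⟪v, T v⟫_ℝ := by
    rw [one_div]
    refine hT.isSymmetric.inv_mul_norm_apply_sq_le hQ.1.eigenvectorBasis (fun i ↦ ?_)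
      hQ.eigenvalues_nonneg fun i ↦ hlamMax ▸ le_ciSup (Set.finite_range _).bddAbove i
    simp [T, Matrix.toLpLin_apply, hQ.1.mulVec_eigenvectorBasis]
  have hconv := strongConvexOn_fenchelConjugate_quadraticFun T (WithLp.toLp 2 a0) b0 hT hm
  rw [hfstar_eq, hfT]
  intro x y hx hy t ht0 ht1
  have hdom := hconv.1 hx hy ht0 (sub_nonneg.2 ht1) (add_sub_cancel t 1)
  have hineq := hconv.2 hx hy ht0 (sub_nonneg.2 ht1) (add_sub_cancel t 1)
  refine (EReal.le_coe_toReal hdom).trans (EReal.coe_le_coe_iff.2 ?_)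
  rw [norm_sub_rev]
  simp only [smul_eq_mul] at hineq
  linarith

/-- For `f(x) = ½xᵀQ₀x + a₀ᵀx + b₀` with `Q₀ ≠ 0` positive
semidefinite and `a₀ ∈ Im(Q₀)`, the Legendre–Fenchel conjugate `f*` is strongly
convex on `ℝⁿ` with constant `1/λ_max(Q₀)` with respect to the Euclidean norm
(the strong convexity inequality being required on the effective domain of `f*`). -/
theorem conjugate_of_convex_quadratic_strongly_convex
    {n : ℕ} (Q : Matrix (Fin n) (Fin n) ℝ)
    (hQ : Q.PosSemidef) (hQ0 : Q ≠ 0)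
    (a0 : Fin n → ℝ) (ha0 : ∃ u : Fin n → ℝ, Q.mulVec u = a0) (b0 : ℝ)
    (f : EuclideanSpace ℝ (Fin n) → ℝ)
    (hf : f = fun x : EuclideanSpace ℝ (Fin n) => (1 / 2) * (∑ i, x i * Q.mulVec (WithLp.ofLp x) i) + (∑ i, a0 i * x i) + b0)
    (fstar : EuclideanSpace ℝ (Fin n) → EReal)
    (hfstar : fstar = fun y => ⨆ x : EuclideanSpace ℝ (Fin n),
      ((∑ j, y j * x j - f x : ℝ) : EReal))
    (lamMax : ℝ) (hlamMax : lamMax = ⨆ i, hQ.1.eigenvalues i) :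
    ∀ x y : EuclideanSpace ℝ (Fin n), fstar x ≠ ⊤ → fstar y ≠ ⊤ →
      ∀ t : ℝ, 0 ≤ t → t ≤ 1 →
      fstar (t • x + (1 - t) • y)
        ≤ ((t * (fstar x).toReal + (1 - t) * (fstar y).toReal
            - (1 / lamMax) * (t * (1 - t)) / 2 * ‖y - x‖ ^ 2 : ℝ) : EReal) :=
  conjugate_of_convex_quadratic_strongly_convex_general Q hQ a0 b0 f hf fstar hfstar lamMax hlamMax
end
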